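/- arXiv:1808.08697 — 4 statements merged into one kernel-verified Lean document; each statement's English description precedes it below -/
import Mathlib

section
/- Let R = (ZMod 2)[x, x⁻¹] be the ring of Laurent polynomials over the two-element field, let ε : R → ZMod 2 be the ring homomorphism evaluating at 1 (sending every power xⁿ to 1), let h : GL(2, R) → GL(2, ZMod 2) be the group homomorphism applying ε entrywise, and let φ be the action of GL(2, R) by group automorphisms on the additive group (ZMod 2) × (ZMod 2) given by M • v = h(M) · v (matrix–vector multiplication). Then PAut[ZMod 2; ZMod 2] is isomorphic as a group to the semidirect product ((ZMod 2) × (ZMod 2)) ⋊_φ GL(2, R). -/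
open Function

/-- The shift map on `ℤ → A`. -/
def shiftMap (A : Type*) : (ℤ → A) → (ℤ → A) := fun x i => x (i + 1)

/-- The shift map as a permutation of `ℤ → A`. -/
def shiftPerm (A : Type*) : Equiv.Perm (ℤ → A) where
  toFun := shiftMap A
  invFun x i := x (i - 1)
  left_inv x := funext fun i => by simp [shiftMap]
  right_inv x := funext fun i => by simp [shiftMap]

/-- Finite types carry the discrete topology. -/
instance fintypeDiscreteTopology (A : Type*) [Fintype A] : TopologicalSpace A := ⊥

/-- The automorphism group of the full shift `A^ℤ`: shift-commuting self-homeomorphisms of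
`ℤ → A`, as a subgroup of the permutation group of `ℤ → A`. -/
def FullShiftAut (A : Type*) [Fintype A] : Subgroup (Equiv.Perm (ℤ → A)) where
  carrier := { f | Continuous ⇑f ∧ Continuous ⇑f.symm ∧
      ∀ x, f (shiftMap A x) = shiftMap A (f x) }
  one_mem' := ⟨continuous_id, continuous_id, fun _ => rfl⟩
  mul_mem' := by
    rintro f g ⟨hf1, hf2, hf3⟩ ⟨hg1, hg2, hg3⟩
    refine ⟨?_, ?_, fun x => ?_⟩
    · exact hf1.comp hg1
    · exact hg2.comp hf2
    · show f (g (shiftMap A x)) = shiftMap A (f (g x))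
      rw [hg3, hf3]
  inv_mem' := by
    rintro f ⟨hf1, hf2, hf3⟩
    refine ⟨hf2, hf1, fun x => ?_⟩
    apply f.injective
    rw [hf3]; simp

/-- The symbol permutation determined by a permutation of the alphabet. -/
def symbolPerm {A : Type*} (π : Equiv.Perm A) : Equiv.Perm (ℤ → A) :=
  Equiv.piCongrRight fun _ => π

/-- The partial shift on the first track. -/
def partialShift₁ (B C : Type*) : Equiv.Perm (ℤ → B × C) where
  toFun x i := ((x (i + 1)).1, (x i).2)
  invFun x i := ((x (i - 1)).1, (x i).2)
  left_inv x := funext fun i => by simp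
  right_inv x := funext fun i => by simp

/-- The partial shift on the second track. -/
def partialShift₂ (B C : Type*) : Equiv.Perm (ℤ → B × C) where
  toFun x i := ((x i).1, (x (i + 1)).2)
  invFun x i := ((x i).1, (x (i - 1)).2)
  left_inv x := funext fun i => by simp
  right_inv x := funext fun i => by simp

/-- `PAut[B;C]`: the subgroup of the automorphism group of `(B × C)^ℤ` generated by the two
partial shifts and all symbol permutations. -/
def PAut (B C : Type*) : Subgroup (Equiv.Perm (ℤ → B × C)) :=
  Subgroup.closure
    ({partialShift₁ B C, partialShift₂ B C} ∪ Set.range (symbolPerm (A := B × C)))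

open Matrix

/-- `(ZMod 2)²` as pairs. -/
abbrev V2 := ZMod 2 × ZMod 2

/-- Identification of pairs with vectors of length two. -/
def pairAddEquiv : V2 ≃+ (Fin 2 → ZMod 2) where
  toFun v := ![v.1, v.2]
  invFun f := (f 0, f 1)
  left_inv v := by simp
  right_inv f := by funext i; fin_cases i <;> simp
  map_add' v w := by funext i; fin_cases i <;> simp

/-- The natural (matrix-vector multiplication) action of an element of `GL(2, ℤ/2)` on
`(ℤ/2)²`, as an additive automorphism. -/
noncomputable def glToAddAut (N : GL (Fin 2) (ZMod 2)) : V2 ≃+ V2 where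
  toFun v := pairAddEquiv.symm ((N : Matrix (Fin 2) (Fin 2) (ZMod 2)).mulVec (pairAddEquiv v))
  invFun v := pairAddEquiv.symm
    (((N⁻¹ : GL (Fin 2) (ZMod 2)) : Matrix (Fin 2) (Fin 2) (ZMod 2)).mulVec (pairAddEquiv v))
  left_inv v := by
    have h1 : ((N : Matrix (Fin 2) (Fin 2) (ZMod 2)))⁻¹ *
        (N : Matrix (Fin 2) (Fin 2) (ZMod 2)) = 1 := by
      rw [← Matrix.coe_units_inv, ← Units.val_mul, inv_mul_cancel, Units.val_one]
    simp only [AddEquiv.apply_symm_apply, Matrix.mulVec_mulVec, Matrix.coe_units_inv, h1,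
      Matrix.one_mulVec, AddEquiv.symm_apply_apply]
  right_inv v := by
    have h1 : (N : Matrix (Fin 2) (Fin 2) (ZMod 2)) *
        ((N : Matrix (Fin 2) (Fin 2) (ZMod 2)))⁻¹ = 1 := by
      rw [← Matrix.coe_units_inv, ← Units.val_mul, mul_inv_cancel, Units.val_one]
    simp only [AddEquiv.apply_symm_apply, Matrix.mulVec_mulVec, Matrix.coe_units_inv, h1,
      Matrix.one_mulVec, AddEquiv.symm_apply_apply]
  map_add' v w := by simp only [map_add, Matrix.mulVec_add]

/-- The natural action of `GL(2, ℤ/2)` on `(ℤ/2)²` by group automorphisms. -/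
noncomputable def natActHom : GL (Fin 2) (ZMod 2) →* MulAut (Multiplicative V2) where
  toFun N := AddEquiv.toMultiplicative (glToAddAut N)
  map_one' := by
    ext v : 1
    simp only [glToAddAut, AddEquiv.toMultiplicative, Units.val_one, Matrix.one_mulVec,
      AddEquiv.symm_apply_apply]
    rfl
  map_mul' M N := by
    ext v : 1
    simp only [glToAddAut, AddEquiv.toMultiplicative, Units.val_mul, ← Matrix.mulVec_mulVec,
      AddEquiv.apply_symm_apply]
    rfl

/-- The action `φ` of `GL(2, ℤ/2[x,x⁻¹])` on `(ℤ/2)²`: apply `ε` entrywise and act naturally. -/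
noncomputable def phiOf (ε : LaurentPolynomial (ZMod 2) →+* ZMod 2) :
    GL (Fin 2) (LaurentPolynomial (ZMod 2)) →* MulAut (Multiplicative V2) :=
  natActHom.comp (Matrix.GeneralLinearGroup.map ε)

section PAutAux
open LaurentPolynomial
set_option maxRecDepth 10000
set_option synthInstance.maxHeartbeats 1000000
set_option maxHeartbeats 1000000
noncomputable section
abbrev F2 := ZMod 2
abbrev R2 := LaurentPolynomial F2
abbrev Wd := ℤ → F2

def shiftEnd : Multiplicative ℤ →* Module.End F2 Wd where
  toFun n := { toFun := fun w i => w (i + n.toAdd),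
               map_add' := fun _ _ => rfl, map_smul' := fun _ _ => rfl }
  map_one' := by ext w i; simp
  map_mul' m n := by ext w i; simp [Module.End.mul_apply, add_assoc]

def thetaRing : R2 →+* Module.End F2 Wd :=
  (AddMonoidAlgebra.lift F2 (Module.End F2 Wd) ℤ shiftEnd).toRingHom

lemma thetaRing_single (n : ℤ) (c : F2) :
    thetaRing (AddMonoidAlgebra.single n c) = c • shiftEnd (Multiplicative.ofAdd n) := by
  show (AddMonoidAlgebra.lift F2 (Module.End F2 Wd) ℤ shiftEnd) (AddMonoidAlgebra.single n c) = _
  rw [AddMonoidAlgebra.lift_single]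

instance : SMul R2 Wd := ⟨fun r w => thetaRing r w⟩

lemma r2_smul_def (r : R2) (w : Wd) : r • w = thetaRing r w := rfl

instance : Module R2 Wd where
  one_smul w := by show thetaRing 1 w = w; rw [_root_.map_one]; rfl
  mul_smul r s w := by show thetaRing (r * s) w = thetaRing r (thetaRing s w); rw [_root_.map_mul]; rfl
  smul_zero r := map_zero (thetaRing r)
  smul_add r := map_add (thetaRing r)
  add_smul r s w := by
    show thetaRing (r + s) w = thetaRing r w + thetaRing s w
    rw [map_add]; rfl
  zero_smul w := by show thetaRing 0 w = 0; rw [map_zero]; rfl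

/-- `Finsupp.single` with the `R2` type. -/
abbrev sg (n : ℤ) (c : F2) : R2 := AddMonoidAlgebra.single n c

lemma single_smul_apply (n : ℤ) (c : F2) (w : Wd) (i : ℤ) :
    ((sg n c) • w) i = c * w (i + n) := by
  rw [r2_smul_def, show sg n c = AddMonoidAlgebra.single n c from rfl, thetaRing_single]
  rfl

lemma T_smul_apply (n : ℤ) (w : Wd) (i : ℤ) : ((T n : R2) • w) i = w (i + n) := by
  have := single_smul_apply n 1 w i
  rw [show (T n : R2) = sg n 1 from rfl, this, one_mul]

lemma C_smul_apply (c : F2) (w : Wd) (i : ℤ) : ((C c : R2) • w) i = c * w i := by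
  have := single_smul_apply 0 c w i
  rw [show (C c : R2) = sg 0 c from rfl, this, add_zero]

-- part 2: matVec, eConf, glPermHom, transPerm
abbrev V2' := V2
abbrev pairAddEquiv' := pairAddEquiv

abbrev Conf := ℤ → V2'
abbrev Conf2 := Fin 2 → Wd

def matVec (M : Matrix (Fin 2) (Fin 2) R2) (v : Conf2) : Conf2 :=
  fun k => ∑ l, M k l • v l

lemma matVec_one (v : Conf2) : matVec 1 v = v := by
  funext k
  simp [matVec, Matrix.one_apply, ite_smul]

lemma matVec_mul (M N : Matrix (Fin 2) (Fin 2) R2) (v : Conf2) :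
    matVec (M * N) v = matVec M (matVec N v) := by
  funext k
  simp only [matVec, Matrix.mul_apply, Finset.sum_smul, Finset.smul_sum, mul_smul]
  exact Finset.sum_comm

lemma matVec_add (M : Matrix (Fin 2) (Fin 2) R2) (v w : Conf2) :
    matVec M (v + w) = matVec M v + matVec M w := by
  funext k
  simp [matVec, smul_add, Finset.sum_add_distrib]

def eConf : Conf ≃ Conf2 where
  toFun x := fun k i => pairAddEquiv' (x i) k
  invFun v := fun i => (v 0 i, v 1 i)
  left_inv x := by funext i; simp [pairAddEquiv]
  right_inv v := by funext k i; fin_cases k <;> simp [pairAddEquiv]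

lemma eConf_add (x y : Conf) : eConf (x + y) = eConf x + eConf y := by
  funext k i
  simp [eConf, map_add]

def glPermP (M : GL (Fin 2) R2) : Equiv.Perm Conf2 where
  toFun := matVec M.val
  invFun := matVec (M⁻¹).val
  left_inv v := by
    rw [← matVec_mul, ← Units.val_mul, inv_mul_cancel, Units.val_one, matVec_one]
  right_inv v := by
    rw [← matVec_mul, ← Units.val_mul, mul_inv_cancel, Units.val_one, matVec_one]

def permCongrMul {α β : Type*} (e : α ≃ β) : Equiv.Perm α ≃* Equiv.Perm β where
  toFun p := (e.symm.trans p).trans e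
  invFun p := (e.trans p).trans e.symm
  left_inv p := by ext x; simp
  right_inv p := by ext x; simp
  map_mul' p q := by ext x; simp [Equiv.Perm.mul_apply]

def glPermPHom : GL (Fin 2) R2 →* Equiv.Perm Conf2 where
  toFun := glPermP
  map_one' := Equiv.ext fun v => by
    show matVec ((1 : GL (Fin 2) R2) : Matrix (Fin 2) (Fin 2) R2) v = v
    rw [Units.val_one, matVec_one]
  map_mul' M N := Equiv.ext fun v => by
    show matVec ((M * N : GL (Fin 2) R2) : Matrix (Fin 2) (Fin 2) R2) v
        = matVec M.val (matVec N.val v)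
    rw [Units.val_mul, matVec_mul]

def glPermHom : GL (Fin 2) R2 →* Equiv.Perm Conf :=
  ((permCongrMul eConf.symm).toMonoidHom).comp glPermPHom

lemma glPermHom_apply (M : GL (Fin 2) R2) (x : Conf) :
    glPermHom M x = eConf.symm (matVec M.val (eConf x)) := rfl

def transPerm : Multiplicative V2' →* Equiv.Perm Conf where
  toFun v := Equiv.addRight (fun _ => v.toAdd : Conf)
  map_one' := Equiv.ext fun x => by
    show x + (fun _ => Multiplicative.toAdd (1 : Multiplicative V2')) = x
    funext i
    simp
  map_mul' v w := Equiv.ext fun x => by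
    show x + (fun _ => Multiplicative.toAdd (v * w))
        = (x + fun _ => Multiplicative.toAdd w) + fun _ => Multiplicative.toAdd v
    funext i
    show x i + (Multiplicative.toAdd v + Multiplicative.toAdd w)
        = x i + Multiplicative.toAdd w + Multiplicative.toAdd v
    abel

lemma transPerm_apply (v : Multiplicative V2') (x : Conf) :
    transPerm v x = x + (fun _ => v.toAdd) := rfl

-- part 3: const/delta lemmas, compat, Psi, injectivity
lemma f2_cases (c : F2) : c = 0 ∨ c = 1 := by revert c; decide

lemma ringHom_F2_id (f : F2 →+* F2) (x : F2) : f x = x := by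
  rcases f2_cases x with h | h <;> simp [h]

section withEps
variable (ε : R2 →+* ZMod 2)

lemma eps_C (c : F2) : ε (C c) = c := ringHom_F2_id (ε.comp C) c

lemma eps_single (hε : ∀ n : ℤ, ε (T n) = 1) (n : ℤ) (c : F2) : ε (AddMonoidAlgebra.single n c) = c := by
  rw [LaurentPolynomial.single_eq_C_mul_T, _root_.map_mul, hε, mul_one, eps_C]

lemma smul_const (hε : ∀ n : ℤ, ε (T n) = 1) (r : R2) (a : F2) :
    (r • (fun _ => a : Wd)) = fun _ => ε r * a := by
  induction r using AddMonoidAlgebra.induction with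
  | zero => funext i; rw [zero_smul, map_zero, zero_mul]; rfl
  | single_add n c f hn hc ih =>
    funext i
    rw [add_smul, map_add]
    have h1 := single_smul_apply n c (fun _ => a) i
    have h2 := congrFun ih i
    rw [Pi.add_apply, h1, h2, show ε (sg n c) = c from eps_single ε hε n c, add_mul]

end withEps

def deltaW : Wd := fun i => if i = 0 then 1 else 0

lemma smul_delta (r : R2) (i : ℤ) : (r • deltaW) i = r.coeff (-i) := by
  induction r using AddMonoidAlgebra.induction with
  | zero => rw [zero_smul]; rfl
  | single_add n c f hn hc ih =>
    rw [add_smul]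
    rw [Pi.add_apply, single_smul_apply, ih, AddMonoidAlgebra.coeff_add, Finsupp.add_apply, AddMonoidAlgebra.coeff_single, Finsupp.single_apply]
    congr 1
    simp only [deltaW]
    by_cases h : i + n = 0
    · rw [if_pos h, if_pos (by omega), mul_one]
    · rw [if_neg h, if_neg (by omega), mul_zero]

section compat
variable (ε : R2 →+* ZMod 2) (hε : ∀ n : ℤ, ε (T n) = 1)
include hε

lemma matVec_const (M : Matrix (Fin 2) (Fin 2) R2) (v : V2') :
    matVec M (eConf (fun _ => v)) = eConf (fun _ => pairAddEquiv'.symm ((M.map ε).mulVec (pairAddEquiv' v))) := by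
  funext k i
  show (∑ l, M k l • (eConf (fun _ => v) l)) i = _
  have hconst : ∀ l, M k l • (eConf (fun _ => v) l) = fun _ => ε (M k l) * pairAddEquiv' v l := by
    intro l
    exact smul_const ε hε (M k l) (pairAddEquiv' v l)
  rw [Finset.sum_apply]
  calc (∑ l, (M k l • eConf (fun _ => v) l) i)
      = ∑ l, ε (M k l) * pairAddEquiv' v l := by
        refine Finset.sum_congr rfl fun l _ => ?_
        rw [hconst l]
    _ = (M.map ε).mulVec (pairAddEquiv' v) k := by
        rw [Matrix.mulVec, dotProduct]
        refine Finset.sum_congr rfl fun l _ => rfl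
    _ = _ := by
        show _ = pairAddEquiv' (pairAddEquiv'.symm ((M.map ε).mulVec (pairAddEquiv' v))) k
        rw [AddEquiv.apply_symm_apply]

lemma glPermHom_affine (M : GL (Fin 2) R2) (x : Conf) (v : V2') :
    glPermHom M (x + fun _ => v)
      = glPermHom M x + fun _ => pairAddEquiv'.symm ((M.val.map ε).mulVec (pairAddEquiv' v)) := by
  apply eConf.injective
  rw [show glPermHom M (x + fun _ => v)
        = eConf.symm (matVec M.val (eConf (x + fun _ => v))) from rfl,
    show glPermHom M x = eConf.symm (matVec M.val (eConf x)) from rfl,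
    Equiv.apply_symm_apply, eConf_add, matVec_add, matVec_const ε hε,
    eConf_add, Equiv.apply_symm_apply]

omit hε in
lemma val_GLmap (f : R2 →+* ZMod 2) (g : GL (Fin 2) R2) :
    ((Matrix.GeneralLinearGroup.map f g : GL (Fin 2) (ZMod 2)) : Matrix (Fin 2) (Fin 2) (ZMod 2))
      = (g : Matrix (Fin 2) (Fin 2) R2).map f := by
  ext i j
  simp [Matrix.map_apply]

omit hε in
lemma toAdd_phiOf (M : GL (Fin 2) R2) (v : Multiplicative V2) :
    Multiplicative.toAdd ((phiOf ε M) v)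
      = pairAddEquiv.symm ((M.val.map ε).mulVec (pairAddEquiv v.toAdd)) := by
  show glToAddAut (Matrix.GeneralLinearGroup.map ε M) v.toAdd = _
  show pairAddEquiv.symm
      (((Matrix.GeneralLinearGroup.map ε M : GL (Fin 2) (ZMod 2)) :
        Matrix (Fin 2) (Fin 2) (ZMod 2)).mulVec (pairAddEquiv v.toAdd)) = _
  rw [val_GLmap]

lemma compat (M : GL (Fin 2) R2) :
    transPerm.comp ((phiOf ε M)).toMonoidHom
      = (MulAut.conj (glPermHom M)).toMonoidHom.comp transPerm := by
  refine MonoidHom.ext fun v => ?_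
  refine Equiv.ext fun x => ?_
  show transPerm ((phiOf ε M) v) x = (glPermHom M * transPerm v * (glPermHom M)⁻¹) x
  rw [transPerm_apply]
  show _ = glPermHom M (transPerm v ((glPermHom M)⁻¹ x))
  rw [show (glPermHom M)⁻¹ = glPermHom M⁻¹ from (map_inv glPermHom M).symm,
    transPerm_apply, glPermHom_affine ε hε]
  have hx : glPermHom M (glPermHom M⁻¹ x) = x := by
    rw [show glPermHom M (glPermHom M⁻¹ x) = (glPermHom M * glPermHom M⁻¹) x from rfl,
      ← _root_.map_mul, mul_inv_cancel, _root_.map_one]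
    rfl
  rw [hx, toAdd_phiOf ε M v]

/-- The homomorphism from the semidirect product to permutations of configurations. -/
def Psi : SemidirectProduct (Multiplicative V2) (GL (Fin 2) R2) (phiOf ε) →* Equiv.Perm Conf :=
  SemidirectProduct.lift transPerm glPermHom (compat ε hε)

lemma Psi_inl (v : Multiplicative V2) : Psi ε hε (SemidirectProduct.inl v) = transPerm v :=
  SemidirectProduct.lift_inl _ _ _ v

lemma Psi_inr (M : GL (Fin 2) R2) : Psi ε hε (SemidirectProduct.inr M) = glPermHom M :=
  SemidirectProduct.lift_inr _ _ _ M

lemma Psi_apply (v : Multiplicative V2) (M : GL (Fin 2) R2) :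
    Psi ε hε ⟨v, M⟩ = transPerm v * glPermHom M := by
  rw [show (⟨v, M⟩ : SemidirectProduct (Multiplicative V2) (GL (Fin 2) R2) (phiOf ε))
      = SemidirectProduct.inl v * SemidirectProduct.inr M from
      (SemidirectProduct.inl_left_mul_inr_right _).symm,
    _root_.map_mul, Psi_inl, Psi_inr]

omit hε in
lemma glPermHom_zero (M : GL (Fin 2) R2) : glPermHom M (0 : Conf) = 0 := by
  have h0 : eConf (0 : Conf) = 0 := by
    funext k i
    show pairAddEquiv ((0 : Conf) i) k = 0
    rw [show ((0 : Conf) i) = 0 from rfl, _root_.map_zero]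
    rfl
  rw [glPermHom_apply, h0]
  have : matVec M.val 0 = 0 := by
    funext k
    show ∑ l, M.val k l • (0 : Wd) = 0
    simp
  rw [this, ← h0, Equiv.symm_apply_apply]

omit hε in
def dconf (l : Fin 2) : Conf2 := fun l' => if l' = l then deltaW else 0

omit hε in
lemma matVec_dconf (M : Matrix (Fin 2) (Fin 2) R2) (l k : Fin 2) :
    matVec M (dconf l) k = M k l • deltaW := by
  show ∑ l', M k l' • dconf l l' = _
  rw [Finset.sum_eq_single l]
  · rw [dconf, if_pos rfl]
  · intro b _ hb
    rw [dconf, if_neg hb, smul_zero]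
  · intro h
    exact absurd (Finset.mem_univ l) h

lemma Psi_injective : Function.Injective (Psi ε hε) := by
  rw [injective_iff_map_eq_one]
  rintro ⟨v, M⟩ h
  rw [Psi_apply] at h
  have happ : ∀ x : Conf, glPermHom M x + (fun _ => v.toAdd) = x := by
    intro x
    have := congrArg (fun p : Equiv.Perm Conf => p x) h
    simpa [Equiv.Perm.mul_apply, transPerm_apply] using this
  have hv : v = 1 := by
    have h0 := happ 0
    rw [glPermHom_zero] at h0
    have := congrFun h0 0
    rw [Pi.add_apply] at this
    have hv0 : v.toAdd = 0 := by
      rw [show (0 : Conf) 0 = 0 from rfl, zero_add] at this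
      exact this
    rw [show v = Multiplicative.ofAdd v.toAdd from rfl, hv0]
    rfl
  have hId : ∀ x : Conf, glPermHom M x = x := by
    intro x
    have := happ x
    rw [hv] at this
    rw [show (fun _ => Multiplicative.toAdd (1 : Multiplicative V2)) = (0 : Conf) from rfl,
      add_zero] at this
    exact this
  have hM : M = 1 := by
    apply Units.ext
    rw [Units.val_one]
    apply Matrix.ext
    intro k l
    have hmv : matVec M.val (dconf l) = dconf l := by
      have h1 := hId (eConf.symm (dconf l))
      rw [glPermHom_apply, Equiv.apply_symm_apply] at h1
      exact eConf.symm.injective h1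
    have h2 : M.val k l • deltaW = dconf l k := by
      rw [← matVec_dconf, hmv]
    apply LaurentPolynomial.ext
    intro m
    have h3 : (M.val k l • deltaW) (-m) = (M.val k l).coeff m := by
      rw [smul_delta, neg_neg]
    rw [← h3, h2]
    rw [Matrix.one_apply]
    by_cases hkl : k = l
    · simp only [dconf, deltaW, if_pos hkl, ← LaurentPolynomial.T_zero,
        LaurentPolynomial.T_apply]
      by_cases hm : m = 0
      · simp [hm]
      · rw [if_neg (by omega), if_neg (by omega)]
    · simp [dconf, hkl]
  rw [hv, hM]
  rfl

end compat

section gens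

/-- Build an element of `GL₂(R2)` from a matrix and explicit inverse. -/
def mkGL (A B : Matrix (Fin 2) (Fin 2) R2) (h1 : A * B = 1) (h2 : B * A = 1) :
    GL (Fin 2) R2 := ⟨A, B, h1, h2⟩

@[simp] lemma mkGL_val (A B : Matrix (Fin 2) (Fin 2) R2) (h1 h2) :
    (mkGL A B h1 h2).val = A := rfl

lemma diag_mul_diag (a b c d : ℤ) :
    (!![T a, 0; 0, T b] : Matrix (Fin 2) (Fin 2) R2) * !![T c, 0; 0, T d]
      = !![T (a + c), 0; 0, T (b + d)] := by
  rw [Matrix.mul_fin_two, T_add a c, T_add b d]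
  ring_nf

/-- Diagonal matrices with unit entries. -/
def dTu (m n : ℤ) : GL (Fin 2) R2 :=
  mkGL !![T m, 0; 0, T n] !![T (-m), 0; 0, T (-n)]
    (by rw [diag_mul_diag]; simp [Matrix.one_fin_two])
    (by rw [diag_mul_diag]; simp [Matrix.one_fin_two])

lemma dTu_mul (a b c d : ℤ) : dTu a b * dTu c d = dTu (a + c) (b + d) :=
  Units.ext (diag_mul_diag a b c d)

lemma dTu_zero : dTu 0 0 = 1 :=
  Units.ext (by show !![T 0, 0; 0, T 0] = 1; rw [T_zero, Matrix.one_fin_two])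

lemma dTu_inv (m n : ℤ) : (dTu m n)⁻¹ = dTu (-m) (-n) := by apply Units.ext; rfl

lemma e12_mul_aux (r s : R2) :
    (!![1, r; 0, 1] : Matrix (Fin 2) (Fin 2) R2) * !![1, s; 0, 1] = !![1, r + s; 0, 1] := by
  rw [Matrix.mul_fin_two]
  ring_nf

/-- Elementary matrices. -/
def e12u (r : R2) : GL (Fin 2) R2 :=
  mkGL !![1, r; 0, 1] !![1, -r; 0, 1]
    (by rw [e12_mul_aux]; simp [Matrix.one_fin_two])
    (by rw [e12_mul_aux]; simp [Matrix.one_fin_two])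

lemma e12u_add (r s : R2) : e12u (r + s) = e12u r * e12u s :=
  Units.ext (by show !![1, r + s; 0, 1] = !![1, r; 0, 1] * !![1, s; 0, 1]; rw [e12_mul_aux])

lemma e12u_zero : e12u 0 = 1 :=
  Units.ext (by show !![1, 0; 0, 1] = 1; rw [Matrix.one_fin_two])

/-- Embedding of `GL₂(𝔽₂)` as constant matrices. -/
def constGL : GL (Fin 2) (ZMod 2) →* GL (Fin 2) R2 :=
  Matrix.GeneralLinearGroup.map (C : F2 →+* R2)

lemma constGL_val (g : GL (Fin 2) (ZMod 2)) :
    (constGL g).val = (g.val).map (C : F2 →+* R2) := by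
  ext i j
  rfl

/-- The generating set. -/
def SGL : Set (GL (Fin 2) R2) := {dTu 1 0, dTu 0 1} ∪ Set.range constGL

/-- The subgroup generated. -/
def HGL : Subgroup (GL (Fin 2) R2) := Subgroup.closure SGL

lemma dTu_mem (m n : ℤ) : dTu m n ∈ HGL := by
  have h1 : dTu 1 0 ∈ HGL := Subgroup.subset_closure (Or.inl (Or.inl rfl))
  have h2 : dTu 0 1 ∈ HGL := Subgroup.subset_closure (Or.inl (Or.inr rfl))
  have hm : ∀ m : ℤ, dTu m 0 ∈ HGL := by
    intro m
    induction m using Int.induction_on with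
    | zero => rw [dTu_zero]; exact one_mem _
    | succ k ih =>
      have h := mul_mem ih h1
      rwa [dTu_mul, add_zero] at h
    | pred k ih =>
      have h := mul_mem ih (inv_mem h1)
      rw [dTu_inv, dTu_mul, show (-(k:ℤ) + -1) = -(k:ℤ) - 1 by ring,
        show ((0:ℤ) + -0) = 0 by ring] at h
      exact h
  have hn : ∀ n : ℤ, dTu 0 n ∈ HGL := by
    intro n
    induction n using Int.induction_on with
    | zero => rw [dTu_zero]; exact one_mem _
    | succ k ih =>
      have h := mul_mem ih h2
      rwa [dTu_mul, add_zero] at h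
    | pred k ih =>
      have h := mul_mem ih (inv_mem h2)
      rw [dTu_inv, dTu_mul, show (-(k:ℤ) + -1) = -(k:ℤ) - 1 by ring,
        show ((0:ℤ) + -0) = 0 by ring] at h
      exact h
  have h := mul_mem (hm m) (hn n)
  rwa [dTu_mul, add_zero, zero_add] at h

/-- The constant elementary matrix over 𝔽₂. -/
def e12F2 : GL (Fin 2) (ZMod 2) := ⟨!![1, 1; 0, 1], !![1, 1; 0, 1], by decide, by decide⟩

lemma e12u_T_mem (n : ℤ) : e12u (T n) ∈ HGL := by
  have hconst : constGL e12F2 ∈ HGL := Subgroup.subset_closure (Or.inr ⟨e12F2, rfl⟩)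
  have key : e12u (T n) = dTu n 0 * constGL e12F2 * dTu (-n) 0 := by
    apply Units.ext
    rw [Units.val_mul, Units.val_mul, constGL_val]
    show !![1, T n; 0, 1]
        = !![T n, 0; 0, T 0] * (e12F2.val.map (C : F2 →+* R2)) * !![T (-n), 0; 0, T (-0)]
    have hmap : (e12F2.val.map (C : F2 →+* R2)) = !![1, 1; 0, 1] := by
      ext i j
      fin_cases i <;> fin_cases j <;>
        simp [e12F2, Matrix.map_apply, _root_.map_one, _root_.map_zero]
    have hTT : (T n : R2) * T (-n) = 1 := by rw [← T_add, add_neg_cancel, T_zero]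
    rw [hmap, show (-0 : ℤ) = 0 from rfl, T_zero]
    ext i j
    fin_cases i <;> fin_cases j <;>
      simp [Matrix.mul_apply, Fin.sum_univ_two, hTT]
  rw [key]
  exact mul_mem (mul_mem (dTu_mem n 0) hconst) (dTu_mem (-n) 0)

lemma e12u_mem (r : R2) : e12u r ∈ HGL := by
  induction r using AddMonoidAlgebra.induction with
  | zero => rw [e12u_zero]; exact one_mem _
  | single_add n c f hn hc ih =>
    rw [e12u_add]
    refine mul_mem ?_ ih
    have hc1 : c = 1 := by
      rcases f2_cases c with h | h
      · exact absurd h hc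
      · exact h
    rw [hc1]
    exact e12u_T_mem n

/-- The swap matrix over 𝔽₂. -/
def swapF2 : GL (Fin 2) (ZMod 2) := ⟨!![0, 1; 1, 0], !![0, 1; 1, 0], by decide, by decide⟩

lemma swapR_val : (constGL swapF2).val = !![0, 1; 1, 0] := by
  rw [constGL_val]
  ext i j
  fin_cases i <;> fin_cases j <;>
    simp [swapF2, Matrix.map_apply, _root_.map_one, _root_.map_zero]

lemma swapR_mem : constGL swapF2 ∈ HGL := Subgroup.subset_closure (Or.inr ⟨swapF2, rfl⟩)

end gens

section euclid

/-- The "degree span" of a Laurent polynomial. -/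
def deg2 (f : R2) : ℕ :=
  if h : f.coeff.support.Nonempty then (f.coeff.support.max' h - f.coeff.support.min' h).toNat else 0

lemma supp_nonempty {f : R2} (hf : f ≠ 0) : f.coeff.support.Nonempty :=
  Finsupp.support_nonempty_iff.mpr (AddMonoidAlgebra.coeff_eq_zero.not.mpr hf)

lemma deg2_eq {f : R2} (h : f.coeff.support.Nonempty) :
    deg2 f = (f.coeff.support.max' h - f.coeff.support.min' h).toNat := by
  rw [deg2, dif_pos h]

lemma coeff_max_one {f : R2} (h : f.coeff.support.Nonempty) : f.coeff (f.coeff.support.max' h) = 1 := by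
  have := Finsupp.mem_support_iff.mp (Finset.max'_mem _ h)
  rcases f2_cases (f.coeff (f.coeff.support.max' h)) with h0 | h1
  · exact absurd h0 this
  · exact h1

lemma coeff_min_one {f : R2} (h : f.coeff.support.Nonempty) : f.coeff (f.coeff.support.min' h) = 1 := by
  have := Finsupp.mem_support_iff.mp (Finset.min'_mem _ h)
  rcases f2_cases (f.coeff (f.coeff.support.min' h)) with h0 | h1
  · exact absurd h0 this
  · exact h1

lemma coeff_zero_of_gt {f : R2} (h : f.coeff.support.Nonempty) {k : ℤ}
    (hk : f.coeff.support.max' h < k) : f.coeff k = 0 := by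
  by_contra hc
  exact absurd (Finset.le_max' _ k (Finsupp.mem_support_iff.mpr hc)) (by omega)

lemma coeff_zero_of_lt {f : R2} (h : f.coeff.support.Nonempty) {k : ℤ}
    (hk : k < f.coeff.support.min' h) : f.coeff k = 0 := by
  by_contra hc
  exact absurd (Finset.min'_le _ k (Finsupp.mem_support_iff.mpr hc)) (by omega)

lemma T_mul_coeff (d k : ℤ) (b : R2) : ((T d : R2) * b).coeff k = b.coeff (k - d) := by
  have h := AddMonoidAlgebra.coeff_single_mul_apply b (1 : F2) d k
  have h2 : ((T d : R2) * b).coeff k = 1 * b.coeff (-d + k) := h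
  rw [h2, one_mul]
  congr 1
  ring

lemma laurent_div (b : R2) (hb : b ≠ 0) :
    ∀ (N : ℕ) (a : R2), (a = 0 ∨ deg2 a < N) →
      ∃ q : R2, a - q * b = 0 ∨ ((a - q * b) ≠ 0 ∧ deg2 (a - q * b) < deg2 b) := by
  intro N
  induction N with
  | zero =>
    rintro a (rfl | h)
    · exact ⟨0, Or.inl (by rw [zero_mul, sub_zero])⟩
    · omega
  | succ N ih =>
    intro a hNa
    by_cases ha : a = 0
    · exact ⟨0, Or.inl (by rw [ha, zero_mul, sub_zero])⟩
    have hN : deg2 a < N + 1 := by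
      rcases hNa with h | h
      · exact absurd h ha
      · exact h
    by_cases hlt : deg2 a < deg2 b
    · exact ⟨0, Or.inr ⟨by rwa [zero_mul, sub_zero], by rwa [zero_mul, sub_zero]⟩⟩
    push_neg at hlt
    have hsa := supp_nonempty ha
    have hsb := supp_nonempty hb
    set ta := a.coeff.support.max' hsa with hta_def
    set ba := a.coeff.support.min' hsa with hba_def
    set tb := b.coeff.support.max' hsb with htb_def
    set bb := b.coeff.support.min' hsb with hbb_def
    have hba_le : ba ≤ ta := Finset.min'_le _ _ (Finset.max'_mem _ _)
    have hbb_le : bb ≤ tb := Finset.min'_le _ _ (Finset.max'_mem _ _)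
    have hdega : deg2 a = (ta - ba).toNat := deg2_eq hsa
    have hdegb : deg2 b = (tb - bb).toNat := deg2_eq hsb
    have hspan : tb - bb ≤ ta - ba := by omega
    set a' := a - T (ta - tb) * b with ha'_def
    have hcoeff : ∀ k : ℤ, a'.coeff k = a.coeff k - b.coeff (k - (ta - tb)) := by
      intro k
      rw [ha'_def, AddMonoidAlgebra.coeff_sub, Finsupp.sub_apply, T_mul_coeff]
    have hsupp : ∀ k, a'.coeff k ≠ 0 → ba ≤ k ∧ k < ta := by
      intro k hk
      rw [hcoeff k] at hk
      constructor
      · by_contra h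
        push_neg at h
        rw [coeff_zero_of_lt hsa h, coeff_zero_of_lt hsb (by omega), sub_zero] at hk
        exact hk rfl
      · by_contra h
        push_neg at h
        rcases eq_or_lt_of_le h with heq | hgt
        · apply hk
          rw [← heq, coeff_max_one hsa, show ta - (ta - tb) = tb by ring,
            coeff_max_one hsb, sub_self]
        · apply hk
          rw [coeff_zero_of_gt hsa hgt, coeff_zero_of_gt hsb (by omega), sub_self]
    by_cases ha0 : a' = 0
    · exact ⟨T (ta - tb), Or.inl ha0⟩
    have hsa' := supp_nonempty ha0
    have hmax' : a'.coeff.support.max' hsa' < ta :=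
      (hsupp _ (Finsupp.mem_support_iff.mp (Finset.max'_mem _ hsa'))).2
    have hmin' : ba ≤ a'.coeff.support.min' hsa' :=
      (hsupp _ (Finsupp.mem_support_iff.mp (Finset.min'_mem _ hsa'))).1
    have hmm : a'.coeff.support.min' hsa' ≤ a'.coeff.support.max' hsa' := Finset.min'_le _ _ (Finset.max'_mem _ _)
    have hdeg' : deg2 a' < deg2 a := by
      rw [deg2_eq hsa', hdega]
      omega
    obtain ⟨q', hq'⟩ := ih a' (Or.inr (by omega))
    refine ⟨T (ta - tb) + q', ?_⟩
    have hrw : a - (T (ta - tb) + q') * b = a' - q' * b := by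
      rw [ha'_def]; ring
    rw [hrw]
    exact hq'

lemma mul_coeff_max (f g : R2) (hf : f.coeff.support.Nonempty) (hg : g.coeff.support.Nonempty) :
    (f * g).coeff (f.coeff.support.max' hf + g.coeff.support.max' hg) = 1 := by
  set tf := f.coeff.support.max' hf with htf
  set tg := g.coeff.support.max' hg with htg
  rw [AddMonoidAlgebra.coeff_mul]
  rw [Finsupp.sum]
  have hstep : ∀ n ∈ f.coeff.support,
      (Finsupp.sum g.coeff fun m c => if n + m = tf + tg then f.coeff n * c else 0)
        = if n = tf then f.coeff tf * g.coeff tg else 0 := by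
    intro n hn
    have hnle : n ≤ tf := Finset.le_max' _ n hn
    rw [Finsupp.sum]
    by_cases hntf : n = tf
    · rw [hntf, if_pos rfl]
      have hcond : ∀ m ∈ g.coeff.support, (if tf + m = tf + tg then f.coeff tf * g.coeff m else 0)
          = if m = tg then f.coeff tf * g.coeff m else 0 := by
        intro m _
        by_cases hm : m = tg
        · rw [if_pos (by omega), if_pos hm]
        · rw [if_neg (by omega), if_neg hm]
      rw [Finset.sum_congr rfl hcond, Finset.sum_ite_eq' g.coeff.support tg (fun m => f.coeff tf * g.coeff m),
        if_pos (Finset.max'_mem _ hg)]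
    · rw [if_neg hntf]
      refine Finset.sum_eq_zero fun m hm => ?_
      have hmle : m ≤ tg := Finset.le_max' _ m hm
      exact if_neg (by omega)
  rw [Finset.sum_congr rfl hstep, Finset.sum_ite_eq' f.coeff.support tf (fun _ => f.coeff tf * g.coeff tg),
    if_pos (Finset.max'_mem _ hf), coeff_max_one hf, coeff_max_one hg, one_mul]

lemma mul_coeff_min (f g : R2) (hf : f.coeff.support.Nonempty) (hg : g.coeff.support.Nonempty) :
    (f * g).coeff (f.coeff.support.min' hf + g.coeff.support.min' hg) = 1 := by
  set tf := f.coeff.support.min' hf with htf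
  set tg := g.coeff.support.min' hg with htg
  rw [AddMonoidAlgebra.coeff_mul]
  rw [Finsupp.sum]
  have hstep : ∀ n ∈ f.coeff.support,
      (Finsupp.sum g.coeff fun m c => if n + m = tf + tg then f.coeff n * c else 0)
        = if n = tf then f.coeff tf * g.coeff tg else 0 := by
    intro n hn
    have hnle : tf ≤ n := Finset.min'_le _ n hn
    rw [Finsupp.sum]
    by_cases hntf : n = tf
    · rw [hntf, if_pos rfl]
      have hcond : ∀ m ∈ g.coeff.support, (if tf + m = tf + tg then f.coeff tf * g.coeff m else 0)
          = if m = tg then f.coeff tf * g.coeff m else 0 := by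
        intro m _
        by_cases hm : m = tg
        · rw [if_pos (by omega), if_pos hm]
        · rw [if_neg (by omega), if_neg hm]
      rw [Finset.sum_congr rfl hcond, Finset.sum_ite_eq' g.coeff.support tg (fun m => f.coeff tf * g.coeff m),
        if_pos (Finset.min'_mem _ hg)]
    · rw [if_neg hntf]
      refine Finset.sum_eq_zero fun m hm => ?_
      have hmle : tg ≤ m := Finset.min'_le _ m hm
      exact if_neg (by omega)
  rw [Finset.sum_congr rfl hstep, Finset.sum_ite_eq' f.coeff.support tf (fun _ => f.coeff tf * g.coeff tg),
    if_pos (Finset.min'_mem _ hf), coeff_min_one hf, coeff_min_one hg, one_mul]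

lemma one_coeff_ne_zero {k : ℤ} (h : (1 : R2).coeff k ≠ 0) : k = 0 := by
  have h1 : (1 : R2).coeff k = (Finsupp.single (0 : ℤ) (1 : F2)) k := rfl
  rw [h1, Finsupp.single_apply] at h
  by_contra hk
  exact h (if_neg (fun hh => hk hh.symm))

lemma isUnit_T_eq (u : R2) (hu : IsUnit u) : ∃ n, u = T n := by
  obtain ⟨v, hv⟩ := hu.exists_right_inv
  have hu0 : u ≠ 0 := by rintro rfl; rw [zero_mul] at hv; exact one_ne_zero hv.symm
  have hv0 : v ≠ 0 := by rintro rfl; rw [mul_zero] at hv; exact one_ne_zero hv.symm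
  have hsu := supp_nonempty hu0
  have hsv := supp_nonempty hv0
  have htop : u.coeff.support.max' hsu + v.coeff.support.max' hsv = 0 := by
    apply one_coeff_ne_zero
    rw [← hv]
    rw [mul_coeff_max u v hsu hsv]
    exact one_ne_zero
  have hbot : u.coeff.support.min' hsu + v.coeff.support.min' hsv = 0 := by
    apply one_coeff_ne_zero
    rw [← hv]
    rw [mul_coeff_min u v hsu hsv]
    exact one_ne_zero
  have h1 : u.coeff.support.min' hsu ≤ u.coeff.support.max' hsu := Finset.min'_le _ _ (Finset.max'_mem _ _)
  have h2 : v.coeff.support.min' hsv ≤ v.coeff.support.max' hsv := Finset.min'_le _ _ (Finset.max'_mem _ _)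
  have heq : u.coeff.support.min' hsu = u.coeff.support.max' hsu := by omega
  refine ⟨u.coeff.support.max' hsu, ?_⟩
  have hsub : u.coeff.support ⊆ {u.coeff.support.max' hsu} := by
    intro k hk
    have hk1 := Finset.le_max' _ k hk
    have hk2 := Finset.min'_le _ k hk
    rw [Finset.mem_singleton]
    omega
  have hsingle := Finsupp.support_subset_singleton.mp hsub
  apply AddMonoidAlgebra.coeff_injective
  calc u.coeff = Finsupp.single (u.coeff.support.max' hsu) (u.coeff (u.coeff.support.max' hsu)) := hsingle
    _ = (T (u.coeff.support.max' hsu)).coeff := by rw [coeff_max_one hsu]; rfl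

end euclid

section generation

lemma TT_cancel (m : ℤ) : (T m : R2) * T (-m) = 1 := by
  rw [← T_add, add_neg_cancel, T_zero]

lemma triangular_mem (M : GL (Fin 2) R2) (hc : M.val 1 0 = 0) : M ∈ HGL := by
  have hdet : IsUnit (M.val.det) := (Matrix.isUnit_iff_isUnit_det M.val).mp ⟨M, rfl⟩
  rw [Matrix.det_fin_two, hc, mul_zero, sub_zero] at hdet
  obtain ⟨m, hm⟩ := isUnit_T_eq _ (isUnit_of_mul_isUnit_left hdet)
  obtain ⟨n, hn⟩ := isUnit_T_eq _ (isUnit_of_mul_isUnit_right hdet)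
  have hdecomp : M = dTu m n * e12u (T (-m) * M.val 0 1) := by
    apply Units.ext
    rw [Units.val_mul]
    show M.val = !![T m, 0; 0, T n] * !![1, T (-m) * M.val 0 1; 0, 1]
    rw [Matrix.mul_fin_two]
    refine Matrix.ext fun i j => ?_
    fin_cases i <;> fin_cases j <;>
      simp [hm, hn, hc, ← mul_assoc, TT_cancel]
  rw [hdecomp]
  exact mul_mem (dTu_mem m n) (e12u_mem _)

lemma genGL_aux : ∀ (N : ℕ) (M : GL (Fin 2) R2),
    (M.val 1 0 = 0 ∨ deg2 (M.val 1 0) < N) → M ∈ HGL := by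
  intro N
  induction N with
  | zero =>
    rintro M (hc | h)
    · exact triangular_mem M hc
    · omega
  | succ N ih =>
    intro M hM
    by_cases hc0 : M.val 1 0 = 0
    · exact triangular_mem M hc0
    have hN : deg2 (M.val 1 0) < N + 1 := by
      rcases hM with h | h
      · exact absurd h hc0
      · exact h
    obtain ⟨q, hq⟩ := laurent_div (M.val 1 0) hc0 (deg2 (M.val 0 0) + 1) (M.val 0 0)
      (Or.inr (by omega))
    set M' := constGL swapF2 * (e12u (-q) * M) with hM'
    have hM'val : M'.val 1 0 = M.val 0 0 - q * M.val 1 0 := by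
      rw [hM', Units.val_mul, Units.val_mul, swapR_val]
      show ((!![0, 1; 1, 0] : Matrix (Fin 2) (Fin 2) R2) * ((!![1, -q; 0, 1] : Matrix (Fin 2) (Fin 2) R2) * M.val)) 1 0 = _
      rw [Matrix.eta_fin_two M.val, Matrix.mul_fin_two, Matrix.mul_fin_two]
      simp
      ring
    have hmem' : M' ∈ HGL := by
      apply ih M'
      rcases hq with h0 | ⟨hne, hlt⟩
      · left; rw [hM'val]; exact h0
      · rw [← hM'val] at hlt
        right; omega
    have hrec : M = (e12u (-q))⁻¹ * ((constGL swapF2)⁻¹ * M') := by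
      rw [hM']
      group
    rw [hrec]
    exact mul_mem (inv_mem (e12u_mem _)) (mul_mem (inv_mem swapR_mem) hmem')

lemma genGL (M : GL (Fin 2) R2) : M ∈ HGL :=
  genGL_aux (deg2 (M.val 1 0) + 1) M (Or.inr (by omega))

end generation

section identify

lemma matVec_two (M : Matrix (Fin 2) (Fin 2) R2) (v : Conf2) (k : Fin 2) :
    matVec M v k = M k 0 • v 0 + M k 1 • v 1 := Fin.sum_univ_two _

lemma psh1 : glPermHom (dTu 1 0) = partialShift₁ (ZMod 2) (ZMod 2) := by
  refine Equiv.ext fun x => funext fun i => ?_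
  show (matVec (dTu 1 0).val (eConf x) 0 i, matVec (dTu 1 0).val (eConf x) 1 i)
      = ((x (i + 1)).1, (x i).2)
  rw [matVec_two, matVec_two]
  show (((T 1 : R2) • eConf x 0 + (0 : R2) • eConf x 1) i,
        ((0 : R2) • eConf x 0 + (T 0 : R2) • eConf x 1) i) = _
  rw [Pi.add_apply, Pi.add_apply, zero_smul, zero_smul, Pi.zero_apply, zero_add, add_zero,
    T_smul_apply, T_smul_apply, add_zero]
  rfl

lemma psh2 : glPermHom (dTu 0 1) = partialShift₂ (ZMod 2) (ZMod 2) := by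
  refine Equiv.ext fun x => funext fun i => ?_
  show (matVec (dTu 0 1).val (eConf x) 0 i, matVec (dTu 0 1).val (eConf x) 1 i)
      = ((x i).1, (x (i + 1)).2)
  rw [matVec_two, matVec_two]
  show (((T 0 : R2) • eConf x 0 + (0 : R2) • eConf x 1) i,
        ((0 : R2) • eConf x 0 + (T 1 : R2) • eConf x 1) i) = _
  rw [Pi.add_apply, Pi.add_apply, zero_smul, zero_smul, Pi.zero_apply, zero_add, add_zero,
    T_smul_apply, T_smul_apply, add_zero]
  rfl

lemma glPermHom_const (g : GL (Fin 2) (ZMod 2)) :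
    glPermHom (constGL g) = symbolPerm (glToAddAut g).toEquiv := by
  refine Equiv.ext fun x => funext fun i => ?_
  show (matVec (constGL g).val (eConf x) 0 i, matVec (constGL g).val (eConf x) 1 i)
      = (glToAddAut g) (x i)
  rw [matVec_two, matVec_two, constGL_val, Matrix.map_apply, Matrix.map_apply,
    Matrix.map_apply, Matrix.map_apply, Pi.add_apply, Pi.add_apply,
    C_smul_apply, C_smul_apply, C_smul_apply, C_smul_apply]
  show _ = pairAddEquiv.symm (g.val.mulVec (pairAddEquiv (x i)))
  have hmv : ∀ k, g.val.mulVec (pairAddEquiv (x i)) k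
      = g.val k 0 * (x i).1 + g.val k 1 * (x i).2 := by
    intro k
    show ∑ l, g.val k l * pairAddEquiv (x i) l = _
    rw [Fin.sum_univ_two]
    rfl
  show _ = (g.val.mulVec (pairAddEquiv (x i)) 0, g.val.mulVec (pairAddEquiv (x i)) 1)
  rw [hmv 0, hmv 1]
  rfl

lemma transPerm_symbol (v : Multiplicative V2) :
    transPerm v = symbolPerm (Equiv.addRight v.toAdd) := by
  refine Equiv.ext fun x => funext fun i => ?_
  rfl

set_option maxHeartbeats 2000000 in
lemma affine_perm : ∀ π : Equiv.Perm V2, ∃ A B : Matrix (Fin 2) (Fin 2) (ZMod 2), ∃ c : V2,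
    A * B = 1 ∧ B * A = 1 ∧ ∀ v : V2,
      π v = ((A.mulVec ![v.1, v.2]) 0 + c.1, (A.mulVec ![v.1, v.2]) 1 + c.2) := by
  decide

end identify

section final
variable (ε : R2 →+* ZMod 2) (hε : ∀ n : ℤ, ε (T n) = 1)

lemma Psi_range : (Psi ε hε).range = PAut (ZMod 2) (ZMod 2) := by
  apply le_antisymm
  · rintro g hg
    obtain ⟨p, rfl⟩ := MonoidHom.mem_range.mp hg
    obtain ⟨v, M⟩ := p
    rw [Psi_apply]
    refine mul_mem ?_ ?_
    · rw [transPerm_symbol]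
      exact Subgroup.subset_closure (Or.inr ⟨_, rfl⟩)
    · have hM := genGL M
      have hle : HGL ≤ (PAut (ZMod 2) (ZMod 2)).comap glPermHom := by
        rw [HGL, Subgroup.closure_le]
        rintro g hg
        rcases hg with (h1 | h2) | ⟨h, rfl⟩
        · rw [h1]
          show glPermHom (dTu 1 0) ∈ PAut (ZMod 2) (ZMod 2)
          rw [psh1]
          exact Subgroup.subset_closure (Or.inl (Or.inl rfl))
        · rw [h2]
          show glPermHom (dTu 0 1) ∈ PAut (ZMod 2) (ZMod 2)
          rw [psh2]
          exact Subgroup.subset_closure (Or.inl (Or.inr rfl))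
        · show glPermHom (constGL h) ∈ PAut (ZMod 2) (ZMod 2)
          rw [glPermHom_const]
          exact Subgroup.subset_closure (Or.inr ⟨_, rfl⟩)
      exact hle hM
  · rw [PAut, Subgroup.closure_le]
    rintro g hg
    rcases hg with (h1 | h2) | ⟨π, rfl⟩
    · rw [h1]
      exact MonoidHom.mem_range.mpr ⟨SemidirectProduct.inr (dTu 1 0), by rw [Psi_inr, psh1]⟩
    · rw [h2]
      exact MonoidHom.mem_range.mpr ⟨SemidirectProduct.inr (dTu 0 1), by rw [Psi_inr, psh2]⟩
    · obtain ⟨A, B, c, hAB, hBA, hπ⟩ := affine_perm π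
      refine MonoidHom.mem_range.mpr ⟨⟨Multiplicative.ofAdd c, constGL ⟨A, B, hAB, hBA⟩⟩, ?_⟩
      rw [Psi_apply]
      refine Equiv.ext fun x => funext fun i => ?_
      show transPerm (Multiplicative.ofAdd c) ((glPermHom (constGL ⟨A, B, hAB, hBA⟩)) x) i
          = symbolPerm π x i
      rw [glPermHom_const, transPerm_apply]
      show symbolPerm (glToAddAut ⟨A, B, hAB, hBA⟩).toEquiv x i + c = π (x i)
      rw [hπ (x i)]
      rfl

end final




end
end PAutAux

/-- `PAut[ℤ/2; ℤ/2] ≅ (ℤ/2)² ⋊ GL(2, ℤ/2[x,x⁻¹])`, where the action is via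
evaluation of each entry at `1`. -/
theorem stmt3 (ε : LaurentPolynomial (ZMod 2) →+* ZMod 2)
    (hε : ∀ n : ℤ, ε (LaurentPolynomial.T n) = 1) :
    Nonempty
      (↥(PAut (ZMod 2) (ZMod 2)) ≃*
        SemidirectProduct (Multiplicative V2)
          (GL (Fin 2) (LaurentPolynomial (ZMod 2))) (phiOf ε)) :=
  ⟨((MonoidHom.ofInjective (Psi_injective ε hε)).trans
    (MulEquiv.subgroupCongr (Psi_range ε hε))).symm⟩
end

section
/- Let Σ be a finite type, X ⊆ (ℤ → Σ) a subshift, G a group acting on a finite type A, and N a subgroup of G satisfying ⁅⊤, N⁆ = N (so N is contained in the hypocenter of G). Then for every g ∈ N and every subset C ⊆ X that is clopen in the subspace topology of X, the bijection ctrl(g, C) of X × A belongs to P(X, G). -/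
/-!
The map `g ↦ ctrl(g, C)` is a homomorphism `G → Sym(X × A)`, and
`⁅ctrl(g, C), ctrl(h, D)⁆ = ctrl(⁅g, h⁆, C ∩ D)`. Hence if `ctrl(h, C) ∈ P` for every `h ∈ G` and
`ctrl(k, D) ∈ P` for every `k ∈ N`, then `ctrl(g, C ∩ D) ∈ P` for every `g ∈ ⁅G, N⁆ = N`.
Starting from the one-coordinate cylinders `{x | x i = s}`, whose controlled maps are generators
of `P` for every `h ∈ G`, this gives `ctrl(g, D) ∈ P` for `g ∈ N` and every cylinder `D`
prescribing finitely many coordinates (for no coordinates, `D = X` is the disjoint union of the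
cylinders `{x | x 0 = s}`). By compactness of `X`, a clopen `C ⊆ X` is a finite disjoint union
of such cylinders, and `ctrl(g, ·)` turns disjoint unions into products.
-/

open Function

attribute [local instance] Classical.propDecidable

/-- The shift on `X × A`, where `X ⊆ ℤ → S` is shift-invariant: `ŝ(x, a) = (σ x, a)`. -/
noncomputable def shiftSub {S : Type*} (X : Set (ℤ → S)) (hX : shiftMap S '' X = X)
    (A : Type*) : Equiv.Perm (↥X × A) :=
  ((shiftPerm S).subtypeEquiv (p := (· ∈ X)) (q := (· ∈ X)) (fun x => by
    constructor
    · intro hx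
      have : shiftMap S x ∈ shiftMap S '' X := ⟨x, hx, rfl⟩
      rw [hX] at this; exact this
    · intro hx
      rw [← hX] at hx
      obtain ⟨y, hy, hxy⟩ := hx
      have : y = x := (shiftPerm S).injective (show shiftPerm S y = shiftPerm S x from hxy)
      exact this ▸ hy)).prodCongr (Equiv.refl A)

/-- The controlled action `ctrl(g, C)` on `X × A`: apply `g` on the second coordinate exactly
when the first coordinate lies in `C`. -/
noncomputable def ctrlSub {S : Type*} (X : Set (ℤ → S)) {G : Type*} [Group G] {A : Type*}
    [MulAction G A] (g : G) (C : Set ↥X) : Equiv.Perm (↥X × A) where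
  toFun p := if p.1 ∈ C then (p.1, g • p.2) else p
  invFun p := if p.1 ∈ C then (p.1, g⁻¹ • p.2) else p
  left_inv := by rintro ⟨x, a⟩; by_cases h : x ∈ C <;> simp [h]
  right_inv := by rintro ⟨x, a⟩; by_cases h : x ∈ C <;> simp [h]

/-- The group `P(X, G)`: generated by the shift on `X × A` together with the controlled maps
`ctrl(g, C)` over basic cylinders `C`. -/
noncomputable def PGroup {S : Type*} (X : Set (ℤ → S)) (hX : shiftMap S '' X = X)
    (G : Type*) [Group G] (A : Type*) [MulAction G A] : Subgroup (Equiv.Perm (↥X × A)) :=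
  Subgroup.closure
    ({shiftSub X hX A} ∪
      {f | ∃ (g : G) (i : ℤ) (s : S), f = ctrlSub X g {x : ↥X | (x : ℤ → S) i = s}})

open scoped commutatorElement

section Controlled

variable {S : Type*} {X : Set (ℤ → S)} {G : Type*} [Group G] {A : Type*} [MulAction G A]

theorem ctrlSub_apply (g : G) (C : Set X) (p : X × A) :
    ctrlSub (A := A) X g C p = if p.1 ∈ C then (p.1, g • p.2) else p := rfl

variable (X G A) in
noncomputable def ctrlHom (C : Set X) : G →* Equiv.Perm (X × A) where
  toFun g := ctrlSub X g C
  map_one' := by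
    ext ⟨x, a⟩ : 1
    by_cases hx : x ∈ C <;> simp [ctrlSub_apply, hx]
  map_mul' g h := by
    ext ⟨x, a⟩ : 1
    by_cases hx : x ∈ C <;> simp [ctrlSub_apply, hx, mul_smul]

@[simp]
theorem ctrlHom_apply (C : Set X) (g : G) : ctrlHom X G A C g = ctrlSub X g C := rfl

theorem ctrlSub_inv (g : G) (C : Set X) :
    (ctrlSub (A := A) X g C)⁻¹ = ctrlSub X g⁻¹ C :=
  (map_inv (ctrlHom X G A C) g).symm

theorem ctrlSub_empty (g : G) : ctrlSub (A := A) X g ∅ = 1 := by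
  ext ⟨x, a⟩ : 1
  simp [ctrlSub_apply]

theorem ctrlSub_union (g : G) {C D : Set X} (hCD : Disjoint C D) :
    ctrlSub (A := A) X g (C ∪ D) = ctrlSub X g C * ctrlSub X g D := by
  ext ⟨x, a⟩ : 1
  by_cases hx : x ∈ C
  · simp [ctrlSub_apply, hx, Set.disjoint_left.mp hCD hx]
  · by_cases hx' : x ∈ D <;> simp [ctrlSub_apply, hx, hx']

theorem ctrlSub_commutator (g h : G) (C D : Set X) :
    ctrlSub (A := A) X ⁅g, h⁆ (C ∩ D) = ⁅ctrlSub (A := A) X g C, ctrlSub (A := A) X h D⁆ := by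
  rw [commutatorElement_def, commutatorElement_def, ctrlSub_inv, ctrlSub_inv]
  ext ⟨x, a⟩ : 1
  by_cases hx : x ∈ C <;> by_cases hx' : x ∈ D <;>
    simp [ctrlSub_apply, hx, hx', mul_smul]

theorem ctrlSub_sUnion_mem (H : Subgroup (Equiv.Perm (X × A))) (g : G) {𝒦 : Set (Set X)}
    (h𝒦 : 𝒦.Finite) (hdisj : 𝒦.PairwiseDisjoint id) (hmem : ∀ K ∈ 𝒦, ctrlSub X g K ∈ H) :
    ctrlSub X g (⋃₀ 𝒦) ∈ H := by
  induction 𝒦, h𝒦 using Set.Finite.induction_on with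
  | empty =>
    rw [Set.sUnion_empty, ctrlSub_empty]
    exact H.one_mem
  | @insert K 𝒦 hK _ ih =>
    rw [Set.pairwiseDisjoint_insert_of_notMem hK] at hdisj
    rw [Set.sUnion_insert, ctrlSub_union g (C := K) (Set.disjoint_sUnion_right.mpr hdisj.2)]
    exact H.mul_mem (hmem K (Set.mem_insert K 𝒦))
      (ih hdisj.1 fun K' hK' => hmem K' (Set.mem_insert_of_mem K hK'))

theorem commutator_comap_ctrlHom_le (H : Subgroup (Equiv.Perm (X × A))) (C D : Set X) :
    ⁅H.comap (ctrlHom X G A C), H.comap (ctrlHom X G A D)⁆ ≤ H.comap (ctrlHom X G A (C ∩ D)) := by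
  rw [Subgroup.commutator_le]
  intro g hg h hh
  rw [Subgroup.mem_comap, ctrlHom_apply, ctrlSub_commutator, commutatorElement_def]
  exact H.mul_mem (H.mul_mem (H.mul_mem hg hh) (H.inv_mem hg)) (H.inv_mem hh)

end Controlled

section Cylinders

variable {ι S : Type*}

def cylinderOn (X : Set (ι → S)) (F : Finset ι) (w : ι → S) : Set X :=
  {y | ∀ i ∈ F, (y : ι → S) i = w i}

variable {X : Set (ι → S)}

theorem mem_cylinderOn_self (F : Finset ι) (x : X) : x ∈ cylinderOn X F x := fun _ _ => rfl

theorem cylinderOn_empty (w : ι → S) : cylinderOn X ∅ w = Set.univ := by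
  simp [cylinderOn]

theorem cylinderOn_insert [DecidableEq ι] (a : ι) (F : Finset ι) (w : ι → S) :
    cylinderOn X (insert a F) w = {y : X | (y : ι → S) a = w a} ∩ cylinderOn X F w := by
  ext y
  simp [cylinderOn]

theorem cylinderOn_eq_of_mem {F : Finset ι} {w : ι → S} {y : X} (hy : y ∈ cylinderOn X F w) :
    cylinderOn X F y = cylinderOn X F w := by
  ext z
  exact forall₂_congr fun i hi => by rw [hy i hi]

theorem pairwiseDisjoint_range_cylinderOn (F : Finset ι) :
    (Set.range (cylinderOn X F)).PairwiseDisjoint id := by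
  rintro _ ⟨w, rfl⟩ _ ⟨w', rfl⟩ hne
  refine Set.disjoint_left.mpr fun y hy hy' => hne ?_
  rw [← cylinderOn_eq_of_mem hy, cylinderOn_eq_of_mem hy']

theorem finite_range_cylinderOn [Finite S] (F : Finset ι) :
    (Set.range (cylinderOn X F)).Finite := by
  refine (Set.finite_range fun p : F → S => {y : X | ∀ i : F, (y : ι → S) i = p i}).subset ?_
  rintro _ ⟨w, rfl⟩
  exact ⟨fun i => w i, by ext y; simp [cylinderOn]⟩

theorem sUnion_range_cylinderOn (F : Finset ι) : ⋃₀ Set.range (cylinderOn X F) = Set.univ :=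
  Set.eq_univ_of_forall fun x => Set.mem_sUnion_of_mem (mem_cylinderOn_self F x) ⟨x, rfl⟩

end Cylinders

section Topology

variable {ι S : Type*} [TopologicalSpace S]

theorem IsOpen.exists_finset_pi_singleton_subset {U : Set (ι → S)} (hU : IsOpen U)
    {x : ι → S} (hx : x ∈ U) : ∃ F : Finset ι, (F : Set ι).pi (fun i => {x i}) ⊆ U := by
  obtain ⟨F, u, hu, hFu⟩ := isOpen_pi_iff.mp hU x hx
  exact ⟨F, (Set.pi_mono fun i hi => Set.singleton_subset_iff.mpr (hu i hi).2).trans hFu⟩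

variable [DiscreteTopology S]

theorem IsCompact.exists_finset_pi_singleton_subset {K U : Set (ι → S)} (hK : IsCompact K)
    (hU : IsOpen U) (hKU : K ⊆ U) :
    ∃ F : Finset ι, ∀ x ∈ K, (F : Set ι).pi (fun i => {x i}) ⊆ U := by
  choose F hF using fun x (hx : x ∈ K) => hU.exists_finset_pi_singleton_subset (hKU hx)
  obtain ⟨t, ht⟩ := hK.elim_nhds_subcover' (fun x hx => (F x hx : Set ι).pi fun i => {x i})
    fun x hx => (isOpen_set_pi (F x hx).finite_toSet fun i _ => isOpen_discrete _).mem_nhds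
      fun i _ => rfl
  refine ⟨t.biUnion fun z => F z z.2, fun x hx y hy => ?_⟩
  obtain ⟨z, hz, hxz⟩ := Set.mem_iUnion₂.mp (ht hx)
  refine hF z z.2 fun i hi => ?_
  rw [hy i (Finset.mem_biUnion.mpr ⟨z, hz, hi⟩)]
  exact hxz i hi

theorem IsClopen.exists_cylinderOn_subset {X : Set (ι → S)} (hX : IsCompact X) {C : Set X}
    (hC : IsClopen C) : ∃ F : Finset ι, ∀ x ∈ C, cylinderOn X F x ⊆ C := by
  have := isCompact_iff_compactSpace.mp hX
  obtain ⟨U, hU, rfl⟩ := isOpen_induced_iff.mp hC.isOpen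
  have hK : IsCompact (Subtype.val '' (Subtype.val ⁻¹' U : Set X)) :=
    hC.isClosed.isCompact.image continuous_subtype_val
  obtain ⟨F, hF⟩ := hK.exists_finset_pi_singleton_subset hU (Set.image_preimage_subset _ _)
  exact ⟨F, fun x hx y hy => hF x ⟨x, hx, rfl⟩ hy⟩

end Topology

section PGroup

variable {S : Type*} {X : Set (ℤ → S)} (hX : shiftMap S '' X = X) {G : Type*} [Group G]
  {A : Type*} [MulAction G A]

theorem ctrlSub_coord_mem_PGroup (g : G) (i : ℤ) (s : S) :
    ctrlSub X g {x : X | (x : ℤ → S) i = s} ∈ PGroup X hX G A :=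
  Subgroup.subset_closure (Or.inr ⟨g, i, s, rfl⟩)

theorem ctrlSub_univ_mem_PGroup [Finite S] (g : G) :
    ctrlSub X g Set.univ ∈ PGroup X hX G A := by
  rw [← sUnion_range_cylinderOn (X := X) {0}]
  refine ctrlSub_sUnion_mem _ g (finite_range_cylinderOn {0})
    (pairwiseDisjoint_range_cylinderOn {0}) ?_
  rintro _ ⟨w, rfl⟩
  simpa [cylinderOn] using ctrlSub_coord_mem_PGroup hX g 0 (w 0)

theorem le_comap_ctrlHom_cylinderOn [Finite S] {N : Subgroup G} (hN : ⁅(⊤ : Subgroup G), N⁆ = N)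
    (F : Finset ℤ) (w : ℤ → S) :
    N ≤ (PGroup X hX G A).comap (ctrlHom X G A (cylinderOn X F w)) := by
  induction F using Finset.induction_on with
  | empty =>
    rw [cylinderOn_empty]
    exact fun g _ => ctrlSub_univ_mem_PGroup hX g
  | insert a F _ ih =>
    rw [cylinderOn_insert]
    calc N = ⁅(⊤ : Subgroup G), N⁆ := hN.symm
      _ ≤ _ := Subgroup.commutator_mono (fun g _ => ctrlSub_coord_mem_PGroup hX g a (w a)) ih
      _ ≤ _ := commutator_comap_ctrlHom_le _ _ _

end PGroup

theorem stmt6_general (S : Type) [Fintype S] (X : Set (ℤ → S))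
    (hXclosed : IsClosed X) (hX : shiftMap S '' X = X)
    (G : Type) [Group G] (A : Type) [MulAction G A]
    (N : Subgroup G) (hN : ⁅(⊤ : Subgroup G), N⁆ = N)
    (g : G) (hg : g ∈ N) (C : Set ↥X) (hC : IsClopen C) :
    ctrlSub X g C ∈ PGroup X hX G A := by
  have : DiscreteTopology S := ⟨rfl⟩
  obtain ⟨F, hF⟩ := hC.exists_cylinderOn_subset hXclosed.isCompact
  have hC_eq : C = ⋃₀ {K ∈ Set.range (cylinderOn X F) | K ⊆ C} :=
    subset_antisymm
      (fun x hx => ⟨cylinderOn X F x, ⟨⟨x, rfl⟩, hF x hx⟩, mem_cylinderOn_self F x⟩)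
      (Set.sUnion_subset fun K hK => hK.2)
  rw [hC_eq]
  refine ctrlSub_sUnion_mem _ g ((finite_range_cylinderOn F).subset (Set.sep_subset _ _))
    ((pairwiseDisjoint_range_cylinderOn F).subset (Set.sep_subset _ _)) ?_
  rintro _ ⟨⟨w, rfl⟩, -⟩
  exact le_comap_ctrlHom_cylinderOn hX hN F w hg

/-- for a subgroup `N` of `G` with `⁅⊤, N⁆ = N` (so `N` is contained in the
hypocenter of `G`), every `ctrl(g, C)` with `g ∈ N` and `C ⊆ X` clopen lies in `P(X, G)`. -/
theorem stmt6 (S : Type) [Fintype S] (X : Set (ℤ → S))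
    (hXclosed : IsClosed X) (hX : shiftMap S '' X = X)
    (G : Type) [Group G] (A : Type) [Fintype A] [MulAction G A]
    (N : Subgroup G) (hN : ⁅(⊤ : Subgroup G), N⁆ = N)
    (g : G) (hg : g ∈ N) (C : Set ↥X) (hC : IsClopen C) :
    ctrlSub X g C ∈ PGroup X hX G A :=
  stmt6_general S X hXclosed hX G A N hN g hg C hC
end

section
/- Let B and C be finite types with |B| ≥ 2 and |C| ≥ 3. For every k ∈ ℕ, every family of fields F : Fin k → Type and every family of dimensions d : Fin k → ℕ, there is no injective group homomorphism from PAut[B;C] into the product group ∏ i, GL(Fin (d i), F i). In other words, PAut[B;C] is not a subdirect product of finitely many linear groups. -/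
open Function

lemma perm_apply_inv_self' {α : Type*} (f : Equiv.Perm α) (x : α) : f (f⁻¹ x) = x :=
  f.apply_symm_apply x

lemma perm_inv_apply_self' {α : Type*} (f : Equiv.Perm α) (x : α) : f⁻¹ (f x) = x :=
  f.symm_apply_apply x

open Matrix


/-! ### Auxiliary constructions -/

section Aux

variable {B C : Type} [DecidableEq B] [DecidableEq C]

/-- generic: powers with `ZMod n` exponents add. -/
lemma pow_val_add {G : Type*} [Group G] (g : G) {n : ℕ} [NeZero n] (hg : g ^ n = 1)
    (a b : ZMod n) : g ^ (a + b).val = g ^ a.val * g ^ b.val := by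
  rw [ZMod.val_add, ← pow_eq_pow_mod _ hg, pow_add]

/-- The 3-cycle `c0 ↦ c2 ↦ c1 ↦ c0`. -/
def tau (c0 c1 c2 : C) : Equiv.Perm C := Equiv.swap c0 c1 * Equiv.swap c0 c2

section TauFacts

variable {c0 c1 c2 : C} (h01 : c0 ≠ c1) (h02 : c0 ≠ c2) (h12 : c1 ≠ c2)

include h01 h02 h12

lemma tau_c0 : tau c0 c1 c2 c0 = c2 := by
  simp only [tau, Equiv.Perm.mul_apply, Equiv.swap_apply_left]
  rw [Equiv.swap_apply_of_ne_of_ne h02.symm h12.symm]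

lemma tau_c1 : tau c0 c1 c2 c1 = c0 := by
  simp only [tau, Equiv.Perm.mul_apply]
  rw [Equiv.swap_apply_of_ne_of_ne h01.symm h12, Equiv.swap_apply_right]

lemma tau_c2 : tau c0 c1 c2 c2 = c1 := by
  simp only [tau, Equiv.Perm.mul_apply, Equiv.swap_apply_right, Equiv.swap_apply_left]

lemma tau_fix {x : C} (hx0 : x ≠ c0) (hx1 : x ≠ c1) (hx2 : x ≠ c2) :
    tau c0 c1 c2 x = x := by
  simp only [tau, Equiv.Perm.mul_apply]
  rw [Equiv.swap_apply_of_ne_of_ne hx0 hx2, Equiv.swap_apply_of_ne_of_ne hx0 hx1]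

lemma tau_pow3 : (tau c0 c1 c2) ^ 3 = 1 := by
  ext x
  have hexpand : ((tau c0 c1 c2) ^ 3) x = tau c0 c1 c2 (tau c0 c1 c2 (tau c0 c1 c2 x)) := by
    rw [pow_succ, pow_succ, pow_one, Equiv.Perm.mul_apply, Equiv.Perm.mul_apply]
  rw [hexpand]
  by_cases hx0 : x = c0
  · subst hx0
    rw [tau_c0 h01 h02 h12, tau_c2 h01 h02 h12, tau_c1 h01 h02 h12]
    rfl
  by_cases hx1 : x = c1
  · subst hx1
    rw [tau_c1 h01 h02 h12, tau_c0 h01 h02 h12, tau_c2 h01 h02 h12]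
    rfl
  by_cases hx2 : x = c2
  · subst hx2
    rw [tau_c2 h01 h02 h12, tau_c1 h01 h02 h12, tau_c0 h01 h02 h12]
    rfl
  · rw [tau_fix h01 h02 h12 hx0 hx1 hx2, tau_fix h01 h02 h12 hx0 hx1 hx2,
      tau_fix h01 h02 h12 hx0 hx1 hx2]
    rfl

end TauFacts

/-- control sum on the second track -/
def Nctrl (c2 : C) (m : ℕ) (e : Fin m → ZMod 2) (x : ℤ → B × C) (i : ℤ) : ZMod 2 :=
  ∑ j : Fin m, e j * (if (x (i - (j.val : ℤ))).2 = c2 then 1 else 0)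

/-- control sum on the first track -/
def Mctrl (b1 : B) (m : ℕ) (dl : Fin m → ZMod 3) (x : ℤ → B × C) (i : ℤ) : ZMod 3 :=
  ∑ l : Fin m, dl l * (if (x (i - (l.val : ℤ))).1 = b1 then 1 else 0)

lemma Nctrl_congr (c2 : C) (m : ℕ) (e : Fin m → ZMod 2) (x y : ℤ → B × C)
    (h : ∀ t, (y t).2 = (x t).2) (i : ℤ) : Nctrl c2 m e y i = Nctrl c2 m e x i := by
  unfold Nctrl
  refine Finset.sum_congr rfl fun j _ => ?_
  rw [h]

lemma Mctrl_congr (b1 : B) (m : ℕ) (dl : Fin m → ZMod 3) (x y : ℤ → B × C)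
    (h : ∀ t, (y t).1 = (x t).1) (i : ℤ) : Mctrl b1 m dl y i = Mctrl b1 m dl x i := by
  unfold Mctrl
  refine Finset.sum_congr rfl fun l _ => ?_
  rw [h]

lemma Nctrl_add (c2 : C) (m : ℕ) (e e' : Fin m → ZMod 2) (x : ℤ → B × C) (i : ℤ) :
    Nctrl c2 m (e + e') x i = Nctrl c2 m e x i + Nctrl c2 m e' x i := by
  unfold Nctrl
  rw [← Finset.sum_add_distrib]
  refine Finset.sum_congr rfl fun j _ => ?_
  rw [Pi.add_apply, add_mul]

lemma Mctrl_add (b1 : B) (m : ℕ) (dl dl' : Fin m → ZMod 3) (x : ℤ → B × C) (i : ℤ) :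
    Mctrl b1 m (dl + dl') x i = Mctrl b1 m dl x i + Mctrl b1 m dl' x i := by
  unfold Mctrl
  rw [← Finset.sum_add_distrib]
  refine Finset.sum_congr rfl fun j _ => ?_
  rw [Pi.add_apply, add_mul]

/-- the underlying function of the controlled `B`-track permutation -/
def uFun (b0 b1 : B) (c2 : C) (m : ℕ) (e : Fin m → ZMod 2) (x : ℤ → B × C) : ℤ → B × C :=
  fun i => (((Equiv.swap b0 b1) ^ (Nctrl c2 m e x i).val) ((x i).1), (x i).2)

lemma swap_sq (b0 b1 : B) : (Equiv.swap b0 b1) ^ 2 = 1 := by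
  rw [pow_two, Equiv.swap_mul_self]

lemma uFun_involutive (b0 b1 : B) (c2 : C) (m : ℕ) (e : Fin m → ZMod 2) :
    Function.Involutive (uFun b0 b1 c2 m e) := by
  intro x
  funext i
  have hsnd : ∀ t, (uFun b0 b1 c2 m e x t).2 = (x t).2 := fun t => rfl
  show (((Equiv.swap b0 b1) ^ (Nctrl c2 m e (uFun b0 b1 c2 m e x) i).val)
      ((uFun b0 b1 c2 m e x i).1), (uFun b0 b1 c2 m e x i).2) = x i
  rw [Nctrl_congr c2 m e x (uFun b0 b1 c2 m e x) hsnd, hsnd i]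
  show (((Equiv.swap b0 b1) ^ (Nctrl c2 m e x i).val)
      (((Equiv.swap b0 b1) ^ (Nctrl c2 m e x i).val) ((x i).1)), (x i).2) = x i
  have h1 : ((Equiv.swap b0 b1) ^ (Nctrl c2 m e x i).val)
      (((Equiv.swap b0 b1) ^ (Nctrl c2 m e x i).val) ((x i).1)) = (x i).1 := by
    rw [← Equiv.Perm.mul_apply, ← pow_val_add _ (swap_sq b0 b1)]
    have h2 : (Nctrl c2 m e x i) + (Nctrl c2 m e x i) = 0 := by
      have : ∀ z : ZMod 2, z + z = 0 := by decide
      exact this _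
    rw [h2, ZMod.val_zero, pow_zero]
    rfl
  rw [h1]

/-- the controlled `B`-track permutation -/
def uPerm (b0 b1 : B) (c2 : C) (m : ℕ) (e : Fin m → ZMod 2) : Equiv.Perm (ℤ → B × C) :=
  (uFun_involutive b0 b1 c2 m e).toPerm

lemma uPerm_apply (b0 b1 : B) (c2 : C) (m : ℕ) (e : Fin m → ZMod 2) (x : ℤ → B × C) :
    uPerm b0 b1 c2 m e x = uFun b0 b1 c2 m e x := rfl

/-- the underlying function of the controlled `C`-track permutation -/
def vFun (b1 : B) (c0 c1 c2 : C) (m : ℕ) (dl : Fin m → ZMod 3) (x : ℤ → B × C) : ℤ → B × C :=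
  fun i => ((x i).1, ((tau c0 c1 c2) ^ (Mctrl b1 m dl x i).val) ((x i).2))

def vFunInv (b1 : B) (c0 c1 c2 : C) (m : ℕ) (dl : Fin m → ZMod 3) (x : ℤ → B × C) : ℤ → B × C :=
  fun i => ((x i).1, ((tau c0 c1 c2) ^ (Mctrl b1 m dl x i).val)⁻¹ ((x i).2))

/-- the controlled `C`-track permutation -/
def vPerm (b1 : B) (c0 c1 c2 : C) (m : ℕ) (dl : Fin m → ZMod 3) : Equiv.Perm (ℤ → B × C) where
  toFun := vFun b1 c0 c1 c2 m dl
  invFun := vFunInv b1 c0 c1 c2 m dl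
  left_inv := by
    intro x
    funext i
    have hfst : ∀ t, (vFun b1 c0 c1 c2 m dl x t).1 = (x t).1 := fun t => rfl
    show vFunInv b1 c0 c1 c2 m dl (vFun b1 c0 c1 c2 m dl x) i = x i
    unfold vFunInv
    rw [Mctrl_congr b1 m dl x _ hfst]
    show (_, ((tau c0 c1 c2) ^ (Mctrl b1 m dl x i).val)⁻¹
      (((tau c0 c1 c2) ^ (Mctrl b1 m dl x i).val) ((x i).2))) = x i
    rw [perm_inv_apply_self', hfst i]
  right_inv := by
    intro x
    funext i
    have hfst : ∀ t, (vFunInv b1 c0 c1 c2 m dl x t).1 = (x t).1 := fun t => rfl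
    show vFun b1 c0 c1 c2 m dl (vFunInv b1 c0 c1 c2 m dl x) i = x i
    unfold vFun
    rw [Mctrl_congr b1 m dl x _ hfst]
    show (_, ((tau c0 c1 c2) ^ (Mctrl b1 m dl x i).val)
      (((tau c0 c1 c2) ^ (Mctrl b1 m dl x i).val)⁻¹ ((x i).2))) = x i
    rw [perm_apply_inv_self', hfst i]

lemma vPerm_apply (b1 : B) (c0 c1 c2 : C) (m : ℕ) (dl : Fin m → ZMod 3) (x : ℤ → B × C) :
    vPerm b1 c0 c1 c2 m dl x = vFun b1 c0 c1 c2 m dl x := rfl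

end Aux

section GroupLaws

variable {B C : Type} [DecidableEq B] [DecidableEq C]

lemma uPerm_zero (b0 b1 : B) (c2 : C) (m : ℕ) : uPerm b0 b1 c2 m 0 = 1 := by
  apply Equiv.ext
  intro x
  funext i
  show uFun b0 b1 c2 m 0 x i = x i
  have hN : Nctrl c2 m (0 : Fin m → ZMod 2) x i = 0 := by
    unfold Nctrl
    refine Finset.sum_eq_zero fun j _ => ?_
    rw [Pi.zero_apply, zero_mul]
  show (((Equiv.swap b0 b1) ^ (Nctrl c2 m 0 x i).val) ((x i).1), (x i).2) = x i
  rw [hN, ZMod.val_zero, pow_zero]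
  rfl

lemma uPerm_add (b0 b1 : B) (c2 : C) (m : ℕ) (e e' : Fin m → ZMod 2) :
    uPerm b0 b1 c2 m (e + e') = uPerm b0 b1 c2 m e * uPerm b0 b1 c2 m e' := by
  apply Equiv.ext
  intro x
  funext i
  show uFun b0 b1 c2 m (e + e') x i = uFun b0 b1 c2 m e (uFun b0 b1 c2 m e' x) i
  have hsnd : ∀ t, (uFun b0 b1 c2 m e' x t).2 = (x t).2 := fun t => rfl
  show (((Equiv.swap b0 b1) ^ (Nctrl c2 m (e + e') x i).val) ((x i).1), (x i).2)
      = (((Equiv.swap b0 b1) ^ (Nctrl c2 m e (uFun b0 b1 c2 m e' x) i).val)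
        ((uFun b0 b1 c2 m e' x i).1), (uFun b0 b1 c2 m e' x i).2)
  rw [Nctrl_congr c2 m e x (uFun b0 b1 c2 m e' x) hsnd, hsnd i]
  show (((Equiv.swap b0 b1) ^ (Nctrl c2 m (e + e') x i).val) ((x i).1), (x i).2)
      = (((Equiv.swap b0 b1) ^ (Nctrl c2 m e x i).val)
        (((Equiv.swap b0 b1) ^ (Nctrl c2 m e' x i).val) ((x i).1)), (x i).2)
  rw [Nctrl_add, pow_val_add _ (swap_sq b0 b1), Equiv.Perm.mul_apply]

lemma tau_pow_val_add {c0 c1 c2 : C} (h01 : c0 ≠ c1) (h02 : c0 ≠ c2) (h12 : c1 ≠ c2)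
    (a b : ZMod 3) :
    (tau c0 c1 c2) ^ (a + b).val = (tau c0 c1 c2) ^ a.val * (tau c0 c1 c2) ^ b.val :=
  pow_val_add _ (tau_pow3 h01 h02 h12) a b

lemma vPerm_zero (b1 : B) (c0 c1 c2 : C) (m : ℕ) : vPerm b1 c0 c1 c2 m 0 = 1 := by
  apply Equiv.ext
  intro x
  funext i
  show vFun b1 c0 c1 c2 m 0 x i = x i
  have hM : Mctrl b1 m (0 : Fin m → ZMod 3) x i = 0 := by
    unfold Mctrl
    refine Finset.sum_eq_zero fun j _ => ?_
    rw [Pi.zero_apply, zero_mul]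
  show ((x i).1, ((tau c0 c1 c2) ^ (Mctrl b1 m 0 x i).val) ((x i).2)) = x i
  rw [hM, ZMod.val_zero, pow_zero]
  rfl

lemma vPerm_add {c0 c1 c2 : C} (h01 : c0 ≠ c1) (h02 : c0 ≠ c2) (h12 : c1 ≠ c2)
    (b1 : B) (m : ℕ) (dl dl' : Fin m → ZMod 3) :
    vPerm b1 c0 c1 c2 m (dl + dl') = vPerm b1 c0 c1 c2 m dl * vPerm b1 c0 c1 c2 m dl' := by
  apply Equiv.ext
  intro x
  funext i
  show vFun b1 c0 c1 c2 m (dl + dl') x i = vFun b1 c0 c1 c2 m dl (vFun b1 c0 c1 c2 m dl' x) i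
  have hfst : ∀ t, (vFun b1 c0 c1 c2 m dl' x t).1 = (x t).1 := fun t => rfl
  show ((x i).1, ((tau c0 c1 c2) ^ (Mctrl b1 m (dl + dl') x i).val) ((x i).2))
      = ((vFun b1 c0 c1 c2 m dl' x i).1,
        ((tau c0 c1 c2) ^ (Mctrl b1 m dl (vFun b1 c0 c1 c2 m dl' x) i).val)
          ((vFun b1 c0 c1 c2 m dl' x i).2))
  rw [Mctrl_congr b1 m dl x (vFun b1 c0 c1 c2 m dl' x) hfst, hfst i]
  show ((x i).1, ((tau c0 c1 c2) ^ (Mctrl b1 m (dl + dl') x i).val) ((x i).2))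
      = ((x i).1, ((tau c0 c1 c2) ^ (Mctrl b1 m dl x i).val)
          (((tau c0 c1 c2) ^ (Mctrl b1 m dl' x i).val) ((x i).2)))
  rw [Mctrl_add, tau_pow_val_add h01 h02 h12, Equiv.Perm.mul_apply]

end GroupLaws

section Membership

variable {B C : Type} [DecidableEq B] [DecidableEq C]

/-- symbol permutation flipping the `B` symbol when the `C` symbol is `c2` -/
def puFun (b0 b1 : B) (c2 : C) : B × C → B × C :=
  fun a => (if a.2 = c2 then Equiv.swap b0 b1 a.1 else a.1, a.2)

lemma puFun_involutive (b0 b1 : B) (c2 : C) : Function.Involutive (puFun b0 b1 c2) := by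
  intro a
  unfold puFun
  by_cases h : a.2 = c2
  · simp only [h, if_pos, if_true, Equiv.swap_apply_self]
    rw [← h]
  · simp [h]

def pu (b0 b1 : B) (c2 : C) : Equiv.Perm (B × C) := (puFun_involutive b0 b1 c2).toPerm

/-- symbol permutation rotating the `C` symbol when the `B` symbol is `b1` -/
def pv (b1 : B) (c0 c1 c2 : C) : Equiv.Perm (B × C) where
  toFun a := (a.1, if a.1 = b1 then tau c0 c1 c2 a.2 else a.2)
  invFun a := (a.1, if a.1 = b1 then (tau c0 c1 c2)⁻¹ a.2 else a.2)
  left_inv a := by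
    by_cases h : a.1 = b1
    · simp only [h, if_true, perm_inv_apply_self']
      rw [← h]
    · simp [h]
  right_inv a := by
    by_cases h : a.1 = b1
    · simp only [h, if_true, perm_apply_inv_self']
      rw [← h]
    · simp [h]

lemma ps1_pow_apply (nn : ℕ) (x : ℤ → B × C) (i : ℤ) :
    ((partialShift₁ B C ^ nn) x) i = ((x (i + nn)).1, (x i).2) := by
  induction nn generalizing x i with
  | zero => simp
  | succ n ih =>
    rw [pow_succ, Equiv.Perm.mul_apply]
    rw [ih]
    show (((partialShift₁ B C x) (i + n)).1, ((partialShift₁ B C x) i).2) = _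
    show ((x (i + n + 1)).1, (x i).2) = ((x (i + (n + 1 : ℕ))).1, (x i).2)
    congr 2
    push_cast
    ring

lemma ps1_inv_pow_apply (nn : ℕ) (x : ℤ → B × C) (i : ℤ) :
    (((partialShift₁ B C)⁻¹ ^ nn) x) i = ((x (i - nn)).1, (x i).2) := by
  induction nn generalizing x i with
  | zero => simp
  | succ n ih =>
    rw [pow_succ, Equiv.Perm.mul_apply]
    rw [ih]
    show ((((partialShift₁ B C)⁻¹ x) (i - n)).1, (((partialShift₁ B C)⁻¹ x) i).2) = _
    show ((x (i - n - 1)).1, (x i).2) = ((x (i - (n + 1 : ℕ))).1, (x i).2)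
    congr 2
    push_cast
    ring

lemma ps2_pow_apply (nn : ℕ) (x : ℤ → B × C) (i : ℤ) :
    ((partialShift₂ B C ^ nn) x) i = ((x i).1, (x (i + nn)).2) := by
  induction nn generalizing x i with
  | zero => simp
  | succ n ih =>
    rw [pow_succ, Equiv.Perm.mul_apply]
    rw [ih]
    show (((partialShift₂ B C x) i).1, ((partialShift₂ B C x) (i + n)).2) = _
    show ((x i).1, (x (i + n + 1)).2) = ((x i).1, (x (i + (n + 1 : ℕ))).2)
    congr 2
    push_cast
    ring

lemma ps2_inv_pow_apply (nn : ℕ) (x : ℤ → B × C) (i : ℤ) :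
    (((partialShift₂ B C)⁻¹ ^ nn) x) i = ((x i).1, (x (i - nn)).2) := by
  induction nn generalizing x i with
  | zero => simp
  | succ n ih =>
    rw [pow_succ, Equiv.Perm.mul_apply]
    rw [ih]
    show ((((partialShift₂ B C)⁻¹ x) i).1, (((partialShift₂ B C)⁻¹ x) (i - n)).2) = _
    show ((x i).1, (x (i - n - 1)).2) = ((x i).1, (x (i - (n + 1 : ℕ))).2)
    congr 2
    push_cast
    ring

lemma uPerm_single (b0 b1 : B) (c2 : C) (m : ℕ) (j : Fin m) :
    uPerm b0 b1 c2 m (Pi.single j 1)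
      = ((partialShift₁ B C) ^ (j.val))⁻¹ * symbolPerm (pu b0 b1 c2)
        * (partialShift₁ B C) ^ (j.val) := by
  apply Equiv.ext
  intro x
  funext i
  have hN : Nctrl c2 m (Pi.single j (1 : ZMod 2)) x i
      = if (x (i - (j.val : ℤ))).2 = c2 then 1 else 0 := by
    unfold Nctrl
    rw [Finset.sum_eq_single j]
    · rw [Pi.single_eq_same, one_mul]
    · intro j' _ hj'
      rw [Pi.single_eq_of_ne hj', zero_mul]
    · intro h
      exact absurd (Finset.mem_univ j) h
  show uFun b0 b1 c2 m (Pi.single j 1) x i = _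
  have hRHS : (((partialShift₁ B C) ^ (j.val))⁻¹ * symbolPerm (pu b0 b1 c2)
        * (partialShift₁ B C) ^ (j.val)) x i
      = ((((symbolPerm (pu b0 b1 c2)) ((partialShift₁ B C ^ j.val) x)) (i - (j.val : ℤ))).1,
        (((symbolPerm (pu b0 b1 c2)) ((partialShift₁ B C ^ j.val) x)) i).2) := by
    rw [Equiv.Perm.mul_apply, Equiv.Perm.mul_apply, ← inv_pow]
    rw [ps1_inv_pow_apply]
  rw [hRHS]
  have hy : ∀ t : ℤ, ((symbolPerm (pu b0 b1 c2)) ((partialShift₁ B C ^ j.val) x)) t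
      = (if (x t).2 = c2 then Equiv.swap b0 b1 ((x (t + (j.val : ℤ))).1)
          else (x (t + (j.val : ℤ))).1, (x t).2) := by
    intro t
    show pu b0 b1 c2 (((partialShift₁ B C ^ j.val) x) t) = _
    rw [ps1_pow_apply]
    rfl
  rw [hy, hy]
  show (((Equiv.swap b0 b1) ^ (Nctrl c2 m (Pi.single j 1) x i).val) ((x i).1), (x i).2) = _
  rw [hN]
  by_cases hc : (x (i - (j.val : ℤ))).2 = c2
  · rw [if_pos hc, if_pos hc]
    show ((Equiv.swap b0 b1 ^ (1 : ZMod 2).val) ((x i).1), (x i).2)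
      = (Equiv.swap b0 b1 ((x (i - (j.val : ℤ) + (j.val : ℤ))).1), (x i).2)
    rw [show (1 : ZMod 2).val = 1 from rfl, pow_one, sub_add_cancel]
  · rw [if_neg hc, if_neg hc]
    show ((Equiv.swap b0 b1 ^ (0 : ZMod 2).val) ((x i).1), (x i).2)
      = ((x (i - (j.val : ℤ) + (j.val : ℤ))).1, (x i).2)
    rw [show (0 : ZMod 2).val = 0 from rfl, pow_zero, sub_add_cancel]
    rfl

lemma vPerm_single (b1 : B) (c0 c1 c2 : C) (m : ℕ) (j : Fin m) :
    vPerm b1 c0 c1 c2 m (Pi.single j 1)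
      = ((partialShift₂ B C) ^ (j.val))⁻¹ * symbolPerm (pv b1 c0 c1 c2)
        * (partialShift₂ B C) ^ (j.val) := by
  apply Equiv.ext
  intro x
  funext i
  have hM : Mctrl b1 m (Pi.single j (1 : ZMod 3)) x i
      = if (x (i - (j.val : ℤ))).1 = b1 then 1 else 0 := by
    unfold Mctrl
    rw [Finset.sum_eq_single j]
    · rw [Pi.single_eq_same, one_mul]
    · intro j' _ hj'
      rw [Pi.single_eq_of_ne hj', zero_mul]
    · intro h
      exact absurd (Finset.mem_univ j) h
  show vFun b1 c0 c1 c2 m (Pi.single j 1) x i = _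
  have hRHS : (((partialShift₂ B C) ^ (j.val))⁻¹ * symbolPerm (pv b1 c0 c1 c2)
        * (partialShift₂ B C) ^ (j.val)) x i
      = ((((symbolPerm (pv b1 c0 c1 c2)) ((partialShift₂ B C ^ j.val) x)) i).1,
        (((symbolPerm (pv b1 c0 c1 c2)) ((partialShift₂ B C ^ j.val) x)) (i - (j.val : ℤ))).2) := by
    rw [Equiv.Perm.mul_apply, Equiv.Perm.mul_apply, ← inv_pow]
    rw [ps2_inv_pow_apply]
  rw [hRHS]
  have hy : ∀ t : ℤ, ((symbolPerm (pv b1 c0 c1 c2)) ((partialShift₂ B C ^ j.val) x)) t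
      = ((x t).1, if (x t).1 = b1 then tau c0 c1 c2 ((x (t + (j.val : ℤ))).2)
          else (x (t + (j.val : ℤ))).2) := by
    intro t
    show pv b1 c0 c1 c2 (((partialShift₂ B C ^ j.val) x) t) = _
    rw [ps2_pow_apply]
    rfl
  rw [hy, hy]
  show ((x i).1, ((tau c0 c1 c2) ^ (Mctrl b1 m (Pi.single j 1) x i).val) ((x i).2)) = _
  rw [hM]
  by_cases hc : (x (i - (j.val : ℤ))).1 = b1
  · rw [if_pos hc, if_pos hc]
    show ((x i).1, (tau c0 c1 c2 ^ (1 : ZMod 3).val) ((x i).2))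
      = ((x i).1, tau c0 c1 c2 ((x (i - (j.val : ℤ) + (j.val : ℤ))).2))
    rw [show (1 : ZMod 3).val = 1 from rfl, pow_one, sub_add_cancel]
  · rw [if_neg hc, if_neg hc]
    show ((x i).1, (tau c0 c1 c2 ^ (0 : ZMod 3).val) ((x i).2))
      = ((x i).1, (x (i - (j.val : ℤ) + (j.val : ℤ))).2)
    rw [show (0 : ZMod 3).val = 0 from rfl, pow_zero, sub_add_cancel]
    rfl

lemma ps1_mem (B C : Type) [Fintype B] [Fintype C] : partialShift₁ B C ∈ PAut B C :=
  Subgroup.subset_closure (Or.inl (by simp))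

lemma ps2_mem (B C : Type) [Fintype B] [Fintype C] : partialShift₂ B C ∈ PAut B C :=
  Subgroup.subset_closure (Or.inl (by simp))

lemma symbolPerm_mem (B C : Type) [Fintype B] [Fintype C] (π : Equiv.Perm (B × C)) :
    symbolPerm π ∈ PAut B C :=
  Subgroup.subset_closure (Or.inr ⟨π, rfl⟩)

variable (B C) [Fintype B] [Fintype C]

lemma uPerm_single_mem (b0 b1 : B) (c2 : C) (m : ℕ) (j : Fin m) (kk : ZMod 2) :
    uPerm b0 b1 c2 m (Pi.single j kk) ∈ PAut B C := by
  have hk' : ∀ z : ZMod 2, z = 0 ∨ z = 1 := by decide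
  rcases hk' kk with rfl | rfl
  · have h0 : (Pi.single j 0 : Fin m → ZMod 2) = 0 := by simp
    rw [h0, uPerm_zero]
    exact one_mem _
  · rw [uPerm_single]
    exact mul_mem (mul_mem (inv_mem (pow_mem (ps1_mem B C) _)) (symbolPerm_mem B C _))
      (pow_mem (ps1_mem B C) _)

lemma vPerm_single_mem {c0 c1 c2 : C} (h01 : c0 ≠ c1) (h02 : c0 ≠ c2) (h12 : c1 ≠ c2)
    (b1 : B) (m : ℕ) (j : Fin m) (kk : ZMod 3) :
    vPerm b1 c0 c1 c2 m (Pi.single j kk) ∈ PAut B C := by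
  have hone : vPerm b1 c0 c1 c2 m (Pi.single j 1) ∈ PAut B C := by
    rw [vPerm_single]
    exact mul_mem (mul_mem (inv_mem (pow_mem (ps2_mem B C) _)) (symbolPerm_mem B C _))
      (pow_mem (ps2_mem B C) _)
  have hk' : ∀ z : ZMod 3, z = 0 ∨ z = 1 ∨ z = 2 := by decide
  rcases hk' kk with rfl | rfl | rfl
  · have h0 : (Pi.single j 0 : Fin m → ZMod 3) = 0 := by simp
    rw [h0, vPerm_zero]
    exact one_mem _
  · exact hone
  · have h2 : (Pi.single j 2 : Fin m → ZMod 3) = Pi.single j 1 + Pi.single j 1 := by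
      rw [← Pi.single_add]
      rfl
    rw [h2, vPerm_add h01 h02 h12]
    exact mul_mem hone hone

lemma uPerm_mem (b0 b1 : B) (c2 : C) (m : ℕ) (e : Fin m → ZMod 2) :
    uPerm b0 b1 c2 m e ∈ PAut B C := by
  have hgen : ∀ s : Finset (Fin m),
      uPerm b0 b1 c2 m (∑ j ∈ s, Pi.single j (e j)) ∈ PAut B C := by
    intro s
    induction s using Finset.induction_on with
    | empty =>
      rw [Finset.sum_empty, uPerm_zero]
      exact one_mem _
    | insert a s ha ih =>
      rw [Finset.sum_insert ha, uPerm_add]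
      exact mul_mem (uPerm_single_mem B C b0 b1 c2 m _ _) ih
  have h1 := hgen Finset.univ
  rwa [Finset.univ_sum_single] at h1

lemma vPerm_mem {c0 c1 c2 : C} (h01 : c0 ≠ c1) (h02 : c0 ≠ c2) (h12 : c1 ≠ c2)
    (b1 : B) (m : ℕ) (dl : Fin m → ZMod 3) :
    vPerm b1 c0 c1 c2 m dl ∈ PAut B C := by
  have hgen : ∀ s : Finset (Fin m),
      vPerm b1 c0 c1 c2 m (∑ j ∈ s, Pi.single j (dl j)) ∈ PAut B C := by
    intro s
    induction s using Finset.induction_on with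
    | empty =>
      rw [Finset.sum_empty, vPerm_zero]
      exact one_mem _
    | insert a s ha ih =>
      rw [Finset.sum_insert ha, vPerm_add h01 h02 h12]
      exact mul_mem (vPerm_single_mem B C h01 h02 h12 b1 m _ _) ih
  have h1 := hgen Finset.univ
  rwa [Finset.univ_sum_single] at h1

end Membership

section NonComm

variable {B C : Type} [DecidableEq B] [DecidableEq C]

/-- indicator-weight function on `ℤ` induced by `e` -/
def E2aux (m : ℕ) (e : Fin m → ZMod 2) (t : ℤ) : ZMod 2 :=
  ∑ j : Fin m, (if (j.val : ℤ) = t then e j else 0)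

lemma noncomm (b0 b1 : B) (hb : b0 ≠ b1) (c0 c1 c2 : C)
    (h01 : c0 ≠ c1) (h02 : c0 ≠ c2) (h12 : c1 ≠ c2)
    (m : ℕ) (e : Fin m → ZMod 2) (dl : Fin m → ZMod 3) (he : e ≠ 0) (hd : dl ≠ 0) :
    uPerm b0 b1 c2 m e * vPerm b1 c0 c1 c2 m dl
      ≠ vPerm b1 c0 c1 c2 m dl * uPerm b0 b1 c2 m e := by
  classical
  have hz2 : ∀ z : ZMod 2, z = 0 ∨ z = 1 := by decide
  have hz3 : ∀ z : ZMod 3, z = 0 ∨ z = 1 ∨ z = 2 := by decide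
  have hSe : (Finset.filter (fun j => e j ≠ 0) Finset.univ).Nonempty := by
    rcases Function.ne_iff.mp he with ⟨j, hj⟩
    exact ⟨j, Finset.mem_filter.mpr ⟨Finset.mem_univ j, by simpa using hj⟩⟩
  have hSd : (Finset.filter (fun l => dl l ≠ 0) Finset.univ).Nonempty := by
    rcases Function.ne_iff.mp hd with ⟨l, hl⟩
    exact ⟨l, Finset.mem_filter.mpr ⟨Finset.mem_univ l, by simpa using hl⟩⟩
  set Se := Finset.filter (fun j => e j ≠ 0) Finset.univ with hSedef
  set Sd := Finset.filter (fun l => dl l ≠ 0) Finset.univ with hSddef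
  set j0 := Se.min' hSe with hj0def
  set j1 := Se.max' hSe with hj1def
  set l1 := Sd.max' hSd with hl1def
  have hj1mem : j1 ∈ Se := Se.max'_mem hSe
  have hl1mem : l1 ∈ Sd := Sd.max'_mem hSd
  have hej1 : e j1 ≠ 0 := (Finset.mem_filter.mp hj1mem).2
  have hdl1 : dl l1 ≠ 0 := (Finset.mem_filter.mp hl1mem).2
  set x : ℤ → B × C := fun t => (b0, if t = -(j0.val : ℤ) then c2 else c0) with hx
  set istar : ℤ := ((j1.val : ℤ) - (j0.val : ℤ)) + (l1.val : ℤ) with histar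
  have hE2big : ∀ t : ℤ, (j1.val : ℤ) < t → E2aux m e t = 0 := by
    intro t ht
    refine Finset.sum_eq_zero fun j _ => ?_
    by_cases hjt : (j.val : ℤ) = t
    · rw [if_pos hjt]
      by_contra hne
      have hjSe : j ∈ Se := Finset.mem_filter.mpr ⟨Finset.mem_univ j, hne⟩
      have hle := Se.le_max' j hjSe
      rw [Fin.le_def] at hle
      rw [← hj1def] at hle
      omega
    · rw [if_neg hjt]
  have hE2j1 : E2aux m e (j1.val : ℤ) = e j1 := by
    unfold E2aux
    rw [Finset.sum_eq_single j1]
    · rw [if_pos rfl]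
    · intro j _ hj
      rw [if_neg]
      intro hc
      apply hj
      have hc2 : j.val = j1.val := by exact_mod_cast hc
      exact Fin.ext hc2
    · intro h
      exact absurd (Finset.mem_univ j1) h
  have hN : ∀ i : ℤ, Nctrl c2 m e x i = E2aux m e (i + (j0.val : ℤ)) := by
    intro i
    unfold Nctrl E2aux
    refine Finset.sum_congr rfl fun j _ => ?_
    have hxc : (x (i - (j.val : ℤ))).2
        = (if i - (j.val : ℤ) = -(j0.val : ℤ) then c2 else c0) := rfl
    rw [hxc]
    by_cases hcond : i - (j.val : ℤ) = -(j0.val : ℤ)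
    · have hcond2 : (j.val : ℤ) = i + (j0.val : ℤ) := by omega
      rw [if_pos hcond, if_pos rfl, mul_one, if_pos hcond2]
    · have hcond2 : ¬((j.val : ℤ) = i + (j0.val : ℤ)) := by omega
      rw [if_neg hcond, if_neg h02, mul_zero, if_neg hcond2]
  have hux2 : ∀ (y : ℤ → B × C) (t : ℤ), ((uPerm b0 b1 c2 m e y) t).2 = (y t).2 :=
    fun y t => rfl
  have hux1 : ∀ t : ℤ, ((uPerm b0 b1 c2 m e x) t).1
      = (if E2aux m e (t + (j0.val : ℤ)) = 1 then b1 else b0) := by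
    intro t
    show ((Equiv.swap b0 b1 ^ (Nctrl c2 m e x t).val) ((x t).1)) = _
    rw [hN t]
    have hx1 : (x t).1 = b0 := rfl
    rw [hx1]
    rcases hz2 (E2aux m e (t + (j0.val : ℤ))) with h | h
    · rw [h, if_neg (by decide : ¬((0 : ZMod 2) = 1)), ZMod.val_zero, pow_zero]
      rfl
    · rw [h, if_pos rfl, show (1 : ZMod 2).val = 1 from rfl, pow_one, Equiv.swap_apply_left]
  have hMx : ∀ i, Mctrl b1 m dl x i = 0 := by
    intro i
    refine Finset.sum_eq_zero fun l _ => ?_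
    have hx1 : (x (i - (l.val : ℤ))).1 = b0 := rfl
    rw [hx1, if_neg hb, mul_zero]
  have hMux : Mctrl b1 m dl (uPerm b0 b1 c2 m e x) istar = dl l1 := by
    unfold Mctrl
    rw [Finset.sum_eq_single l1]
    · rw [hux1]
      have harg : istar - (l1.val : ℤ) + (j0.val : ℤ) = (j1.val : ℤ) := by
        rw [histar]; ring
      rw [harg, hE2j1]
      have he1 : e j1 = 1 := by
        rcases hz2 (e j1) with h | h
        · exact absurd h hej1
        · exact h
      rw [he1, if_pos rfl, if_pos rfl, mul_one]
    · intro l _ hl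
      by_cases hdl0 : dl l = 0
      · rw [hdl0, zero_mul]
      · have hlmem : l ∈ Sd := Finset.mem_filter.mpr ⟨Finset.mem_univ l, hdl0⟩
        have hle := Sd.le_max' l hlmem
        rw [Fin.le_def] at hle
        rw [← hl1def] at hle
        have hlt : l.val < l1.val := by
          rcases lt_or_eq_of_le hle with h | h
          · exact h
          · exact absurd (Fin.ext h) hl
        rw [hux1]
        have harg : istar - (l.val : ℤ) + (j0.val : ℤ)
            = (j1.val : ℤ) + ((l1.val : ℤ) - (l.val : ℤ)) := by
          rw [histar]; ring
        rw [harg, hE2big _ (by omega)]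
        rw [if_neg (by decide : ¬((0 : ZMod 2) = 1)), if_neg hb, mul_zero]
    · intro h
      exact absurd (Finset.mem_univ l1) h
  intro hcontra
  have h1 : (uPerm b0 b1 c2 m e * vPerm b1 c0 c1 c2 m dl) x istar
      = (vPerm b1 c0 c1 c2 m dl * uPerm b0 b1 c2 m e) x istar := by
    rw [hcontra]
  have h1' := congrArg Prod.snd h1
  have hL : ((uPerm b0 b1 c2 m e * vPerm b1 c0 c1 c2 m dl) x istar).2 = (x istar).2 := by
    rw [Equiv.Perm.mul_apply]
    rw [hux2]
    show ((tau c0 c1 c2) ^ (Mctrl b1 m dl x istar).val) ((x istar).2) = (x istar).2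
    rw [hMx, ZMod.val_zero, pow_zero]
    rfl
  have hR : ((vPerm b1 c0 c1 c2 m dl * uPerm b0 b1 c2 m e) x istar).2
      = ((tau c0 c1 c2) ^ (dl l1).val) ((x istar).2) := by
    rw [Equiv.Perm.mul_apply]
    show ((tau c0 c1 c2) ^ (Mctrl b1 m dl (uPerm b0 b1 c2 m e x) istar).val)
        (((uPerm b0 b1 c2 m e x) istar).2) = _
    rw [hMux, hux2]
  have h2 : (x istar).2 = ((tau c0 c1 c2) ^ (dl l1).val) ((x istar).2) :=
    hL.symm.trans (h1'.trans hR)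
  have hxc : (x istar).2 = c0 ∨ (x istar).2 = c2 := by
    show (if istar = -(j0.val : ℤ) then c2 else c0) = c0
      ∨ (if istar = -(j0.val : ℤ) then c2 else c0) = c2
    by_cases h : istar = -(j0.val : ℤ)
    · right; rw [if_pos h]
    · left; rw [if_neg h]
  rcases hz3 (dl l1) with h | h | h
  · exact hdl1 h
  · rw [h, show (1 : ZMod 3).val = 1 from rfl, pow_one] at h2
    rcases hxc with hc | hc <;> rw [hc] at h2
    · exact h02 (h2.trans (tau_c0 h01 h02 h12))
    · exact h12 (h2.trans (tau_c2 h01 h02 h12)).symm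
  · rw [h, show (2 : ZMod 3).val = 2 from rfl, pow_two] at h2
    rw [Equiv.Perm.mul_apply] at h2
    rcases hxc with hc | hc <;> rw [hc] at h2
    · rw [tau_c0 h01 h02 h12, tau_c2 h01 h02 h12] at h2
      exact h01 h2
    · rw [tau_c2 h01 h02 h12, tau_c1 h01 h02 h12] at h2
      exact h02 h2.symm

end NonComm

open Function Module

section Key

variable (p : ℕ) (K : Type) [Field K] [IsAlgClosed K]

set_option maxHeartbeats 1000000 in
theorem key_card_le (hp : p.Prime) (hchar : (p : K) ≠ 0) :
    ∀ n : ℕ, ∀ (V : Type) (_ : AddCommGroup V) (_ : Module K V) (_ : FiniteDimensional K V),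
      finrank K V = n →
      ∀ (H : Type) (_ : CommGroup H) (_ : Finite H), (∀ h : H, h ^ p = 1) →
      ∀ ψ : H →* (Module.End K V)ˣ, Injective ψ → Nat.card H ≤ p ^ n := by
  have hfact : Fact p.Prime := ⟨hp⟩
  intro n
  induction n using Nat.strong_induction_on with
  | _ n IH =>
  intro V _inst1 _inst2 _inst3 hV H _inst4 _inst5 hexp ψ hinj
  rcases Nat.eq_zero_or_pos n with hn0 | hnpos
  · subst hn0
    have hsub : Subsingleton V := Module.finrank_zero_iff.mp hV
    have hsubE : Subsingleton (Module.End K V) :=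
      ⟨fun f g => LinearMap.ext fun v => Subsingleton.elim _ _⟩
    have hsubU : Subsingleton (Module.End K V)ˣ :=
      ⟨fun a b => Units.ext (Subsingleton.elim _ _)⟩
    have hsubH : Subsingleton H := ⟨fun a b => hinj (Subsingleton.elim _ _)⟩
    have hu : Unique H := ⟨⟨1⟩, fun a => Subsingleton.elim a 1⟩
    simp [Nat.card_unique]
  have hVnt : Nontrivial V := Module.finrank_pos_iff.mp (hV ▸ hnpos)
  obtain ⟨v₀, hv₀⟩ := exists_ne (0 : V)
  have hone_ne : (1 : Module.End K V) ≠ 0 := by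
    intro h
    exact hv₀ (by simpa using congrArg (fun f : Module.End K V => f v₀) h)
  have hEnt : Nontrivial (Module.End K V) := ⟨⟨1, 0, hone_ne⟩⟩
  have hscal_inj : ∀ a b : K, a • (1 : Module.End K V) = b • 1 → a = b := by
    intro a b hab
    have h2 := congrArg (fun f : Module.End K V => f v₀) hab
    simp only [LinearMap.smul_apply, Module.End.one_apply] at h2
    by_contra hne
    have h3 : (a - b) • v₀ = 0 := by rw [sub_smul, h2, sub_self]
    rcases smul_eq_zero.mp h3 with h | h
    · exact hne (sub_eq_zero.mp h)
    · exact hv₀ h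
  by_cases hsc : ∀ h : H, ∃ c : K, ((ψ h : (Module.End K V)ˣ) : Module.End K V) = c • 1
  · -- scalar case
    choose c hc using hsc
    have hcne : ∀ h, c h ≠ 0 := by
      intro h h0
      have h1 : ((ψ h : (Module.End K V)ˣ) : Module.End K V) = 0 := by
        rw [hc h, h0, zero_smul]
      exact Units.ne_zero (ψ h) h1
    have hmul : ∀ a b : H, c (a * b) = c a * c b := by
      intro a b
      apply hscal_inj
      rw [← hc (a * b), _root_.map_mul, Units.val_mul, hc a, hc b, smul_mul_smul_comm, one_mul]
    let χ : H →* Kˣ := MonoidHom.mk' (fun h => Units.mk0 (c h) (hcne h))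
      (fun a b => by ext; exact hmul a b)
    have hχinj : Injective χ := by
      intro a b hab
      apply hinj
      apply Units.ext
      rw [hc a, hc b]
      have : c a = c b := congrArg Units.val hab
      rw [this]
    have hfinr : Finite ↥χ.range := Finite.of_surjective _ χ.rangeRestrict_surjective
    have hcyc : IsCyclic ↥χ.range := subgroup_units_cyclic _
    obtain ⟨g, hg⟩ := hcyc.exists_generator
    have hgp : g ^ p = 1 := by
      obtain ⟨h, hh⟩ := g.2
      apply Subtype.ext
      push_cast
      rw [← hh, ← _root_.map_pow, hexp, _root_.map_one]
    have hfin2 : Fintype ↥χ.range := Fintype.ofFinite _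
    have hcard : Nat.card ↥χ.range = orderOf g := by
      exact (orderOf_eq_card_of_forall_mem_zpowers hg).symm
    have hHle : Nat.card H ≤ p := by
      calc Nat.card H ≤ Nat.card ↥χ.range := by
            apply Nat.card_le_card_of_injective
              (fun h => (⟨χ h, ⟨h, rfl⟩⟩ : ↥χ.range))
            intro a b hab
            exact hχinj (congrArg Subtype.val hab)
        _ = orderOf g := hcard
        _ ≤ p := Nat.le_of_dvd hp.pos (orderOf_dvd_of_pow_eq_one hgp)
    exact hHle.trans (Nat.le_self_pow hnpos.ne' p)
  · -- non-scalar case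
    push_neg at hsc
    obtain ⟨h₀, hh₀⟩ := hsc
    have hNZ : NeZero ((p : ℕ) : K) := ⟨hchar⟩
    obtain ⟨ζ, hζ⟩ := HasEnoughRootsOfUnity.exists_primitiveRoot K p
    have hζp : ζ ^ p = 1 := hζ.pow_eq_one
    have hζ1 : ζ ≠ 1 := hζ.ne_one hp.one_lt
    set e₀ : Module.End K V := ((ψ h₀ : (Module.End K V)ˣ) : Module.End K V) with he₀
    have he₀p : e₀ ^ p = 1 := by
      have h1 : ψ h₀ ^ p = 1 := by rw [← _root_.map_pow, hexp, _root_.map_one]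
      rw [he₀, ← Units.val_pow_eq_pow_val, h1, Units.val_one]
    set Z : ZMod p → K := fun a => ζ ^ a.val with hZ
    set E : ZMod p → Module.End K V := fun a => e₀ ^ a.val with hE
    have Zadd : ∀ a b, Z (a + b) = Z a * Z b := by
      intro a b
      simp only [hZ]
      rw [ZMod.val_add, ← pow_eq_pow_mod _ hζp, pow_add]
    have Eadd : ∀ a b, E (a + b) = E a * E b := by
      intro a b
      simp only [hE]
      rw [ZMod.val_add, ← pow_eq_pow_mod _ he₀p, pow_add]
    have Z0 : Z 0 = 1 := by simp [hZ]
    have E0 : E 0 = 1 := by simp [hE]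
    have E1 : E 1 = e₀ := by simp [hE, ZMod.val_one]
    set Pi : ZMod p → Module.End K V :=
      fun j => (p : K)⁻¹ • ∑ k : ZMod p, Z (-(j * k)) • E k with hPi
    have hcommE : ∀ h : H, ∀ j, Commute ((ψ h : (Module.End K V)ˣ) : Module.End K V) (Pi j) := by
      intro h j
      have h1 : Commute ((ψ h : (Module.End K V)ˣ) : Module.End K V) e₀ := by
        have h2 : ψ h * ψ h₀ = ψ h₀ * ψ h := by rw [← _root_.map_mul, ← _root_.map_mul, mul_comm]
        have h3 := congrArg (Units.val) h2
        simp only [Units.val_mul] at h3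
        exact h3
      apply Commute.smul_right
      apply Commute.sum_right
      intro k _
      exact (h1.pow_right k.val).smul_right _
    -- geometric sum over ZMod p
    have hT : ∑ a : ZMod p, Z a = 0 := by
      have hstep : ∀ a : ZMod p, Z a * ζ = Z (a + 1) := by
        intro a
        have : Z (a + 1) = Z a * Z 1 := Zadd a 1
        rw [this, hZ]
        simp [ZMod.val_one]
      have h1 : (∑ a : ZMod p, Z a) * (ζ - 1) = 0 := by
        rw [mul_sub, mul_one, Finset.sum_mul]
        rw [Finset.sum_congr rfl fun a _ => hstep a]
        have h2 : ∑ a : ZMod p, Z (a + 1) = ∑ a : ZMod p, Z a :=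
          Fintype.sum_equiv (Equiv.addRight (1 : ZMod p)) (fun a => Z (a + 1)) Z (fun a => rfl)
        rw [h2, sub_self]
      rcases mul_eq_zero.mp h1 with h | h
      · exact h
      · exact absurd (sub_eq_zero.mp h) hζ1
    have hsumZ : ∀ t : ZMod p, t ≠ 0 → ∑ j : ZMod p, Z (-(j * t)) = 0 := by
      intro t ht
      have hbij : Function.Bijective (fun j : ZMod p => -(j * t)) := by
        have h1 : Function.Bijective (fun j : ZMod p => j * t) := mulRight_bijective₀ t ht
        exact neg_involutive.bijective.comp h1
      rw [Function.Bijective.sum_comp hbij Z]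
      exact hT
    have hcardZ : (Fintype.card (ZMod p) : K) = (p : K) := by rw [ZMod.card]
    have hPisum : ∑ j : ZMod p, Pi j = 1 := by
      simp only [hPi]
      rw [← Finset.smul_sum, Finset.sum_comm]
      have h3 : ∀ k : ZMod p,
          ∑ j : ZMod p, Z (-(j * k)) • E k = (∑ j : ZMod p, Z (-(j * k))) • E k :=
        fun k => (Finset.sum_smul).symm
      rw [Finset.sum_congr rfl fun k _ => h3 k]
      rw [Finset.sum_eq_single 0]
      · have h4 : ∀ j : ZMod p, -(j * (0 : ZMod p)) = 0 := by intro j; ring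
        rw [Finset.sum_congr rfl fun j _ => by rw [h4 j]]
        rw [Z0, E0, Finset.sum_const, Finset.card_univ, nsmul_eq_mul, mul_one]
        rw [hcardZ, smul_smul, inv_mul_cancel₀ hchar, one_smul]
      · intro k _ hk
        rw [hsumZ k hk, zero_smul]
      · intro h
        exact absurd (Finset.mem_univ 0) h
    have hterm : ∀ j k l : ZMod p,
        (Z (-(j * k)) • E k) * (Z (-(j * l)) • E l) = Z (-(j * (k + l))) • E (k + l) := by
      intro j k l
      rw [smul_mul_assoc, mul_smul_comm, smul_smul, ← Zadd, ← Eadd]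
      congr 2
      ring
    have hPiIdem : ∀ j, Pi j * Pi j = Pi j := by
      intro j
      conv_lhs => rw [hPi]
      rw [smul_mul_assoc, mul_smul_comm, smul_smul, Finset.sum_mul_sum]
      rw [Finset.sum_congr rfl fun k _ => Finset.sum_congr rfl fun l _ => hterm j k l]
      have hres : ∀ k : ZMod p,
          ∑ l : ZMod p, Z (-(j * (k + l))) • E (k + l) = ∑ s : ZMod p, Z (-(j * s)) • E s :=
        fun k => Fintype.sum_equiv (Equiv.addLeft k)
          (fun l => Z (-(j * (k + l))) • E (k + l)) (fun s => Z (-(j * s)) • E s) (fun l => rfl)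
      rw [Finset.sum_congr rfl fun k _ => hres k]
      rw [Finset.sum_const, Finset.card_univ]
      rw [← Nat.cast_smul_eq_nsmul K, hcardZ, smul_smul]
      have hc2 : ((p : K)⁻¹ * (p : K)⁻¹ * (p : K)) = (p : K)⁻¹ := by field_simp
      rw [hc2]
    have hPiEig : ∀ j, e₀ * Pi j = Z j • Pi j := by
      intro j
      rw [hPi, mul_smul_comm, Finset.mul_sum]
      have h1 : ∀ k : ZMod p, e₀ * (Z (-(j * k)) • E k) = Z (-(j * k)) • E (1 + k) := by
        intro k
        rw [mul_smul_comm, Eadd, E1]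
      rw [Finset.sum_congr rfl fun k _ => h1 k]
      have h2 : ∑ k : ZMod p, Z (-(j * k)) • E (1 + k)
          = ∑ s : ZMod p, (Z j * Z (-(j * s))) • E s := by
        apply Fintype.sum_equiv (Equiv.addLeft (1 : ZMod p)) _ _
        intro k
        show Z (-(j * k)) • E (1 + k) = (Z j * Z (-(j * (1 + k)))) • E (1 + k)
        rw [← Zadd]
        congr 2
        ring
      rw [h2]
      rw [Finset.sum_congr rfl fun s _ => by rw [mul_smul]]
      rw [← Finset.smul_sum, smul_comm]
    have hex : ∃ j, Pi j ≠ 0 ∧ Pi j ≠ 1 := by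
      by_contra hcon
      push_neg at hcon
      by_cases hall : ∀ j, Pi j = 0
      · rw [Finset.sum_eq_zero (fun j _ => hall j)] at hPisum
        exact hone_ne hPisum.symm
      · push_neg at hall
        obtain ⟨j, hj⟩ := hall
        have h1 : Pi j = 1 := hcon j hj
        have h2 : e₀ = Z j • 1 := by
          have := hPiEig j
          rw [h1, mul_one] at this
          exact this
        exact hh₀ (Z j) h2
    obtain ⟨j₀, hP0, hP1⟩ := hex
    set π₀ := Pi j₀ with hπ₀
    have hid : π₀ * π₀ = π₀ := hPiIdem j₀
    have hcomm₀ : ∀ h : H, ((ψ h : (Module.End K V)ˣ) : Module.End K V) * π₀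
        = π₀ * ((ψ h : (Module.End K V)ˣ) : Module.End K V) := by
      intro h
      rw [hπ₀]
      exact (hcommE h j₀).eq
    have hR_inv : ∀ h : H, ∀ x ∈ LinearMap.range π₀,
        ((ψ h : (Module.End K V)ˣ) : Module.End K V) x ∈ LinearMap.range π₀ := by
      rintro h x ⟨y, rfl⟩
      refine ⟨((ψ h : (Module.End K V)ˣ) : Module.End K V) y, ?_⟩
      rw [← Module.End.mul_apply, ← hcomm₀ h, Module.End.mul_apply]
    have hW_inv : ∀ h : H, ∀ x ∈ LinearMap.ker π₀,
        ((ψ h : (Module.End K V)ˣ) : Module.End K V) x ∈ LinearMap.ker π₀ := by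
      intro h x hx
      rw [LinearMap.mem_ker] at hx ⊢
      rw [← Module.End.mul_apply, ← hcomm₀ h, Module.End.mul_apply, hx, _root_.map_zero]
    have mkRes : ∀ (q : Submodule K V),
        (∀ h : H, ∀ x ∈ q, ((ψ h : (Module.End K V)ˣ) : Module.End K V) x ∈ q) →
        ∃ ρ : H →* (Module.End K ↥q)ˣ, ∀ (h : H) (x : ↥q),
          (((ρ h : (Module.End K ↥q)ˣ) : Module.End K ↥q) x : V)
            = ((ψ h : (Module.End K V)ˣ) : Module.End K V) x := by
      intro q hq
      refine ⟨MonoidHom.toHomUnits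
        { toFun := fun h => LinearMap.restrict _ (hq h)
          map_one' := ?_
          map_mul' := ?_ }, ?_⟩
      · ext x
        simp [LinearMap.restrict_apply]
      · intro a b
        ext x
        simp [LinearMap.restrict_apply, Units.val_mul, Module.End.mul_apply]
      · intro h x
        simp [MonoidHom.coe_toHomUnits, LinearMap.restrict_apply]
    obtain ⟨ρR, hρR⟩ := mkRes (LinearMap.range π₀) hR_inv
    obtain ⟨ρW, hρW⟩ := mkRes (LinearMap.ker π₀) hW_inv
    have hmemW : ∀ v : V, v - π₀ v ∈ LinearMap.ker π₀ := by
      intro v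
      rw [LinearMap.mem_ker, _root_.map_sub, ← Module.End.mul_apply, hid, sub_self]
    have hbridge : ∀ h : H, ρR h = 1 → ρW h = 1 → h = 1 := by
      intro h h1 h2
      apply hinj
      rw [_root_.map_one]
      apply Units.ext
      rw [Units.val_one]
      apply LinearMap.ext
      intro v
      have hv1 : ((ψ h : (Module.End K V)ˣ) : Module.End K V) (π₀ v) = π₀ v := by
        have := hρR h ⟨π₀ v, ⟨v, rfl⟩⟩
        rw [h1] at this
        simpa using this.symm
      have hv2 : ((ψ h : (Module.End K V)ˣ) : Module.End K V) (v - π₀ v) = v - π₀ v := by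
        have := hρW h ⟨v - π₀ v, hmemW v⟩
        rw [h2] at this
        simpa using this.symm
      calc ((ψ h : (Module.End K V)ˣ) : Module.End K V) v
          = ((ψ h : (Module.End K V)ˣ) : Module.End K V) (π₀ v + (v - π₀ v)) := by
            rw [add_sub_cancel]
        _ = ((ψ h : (Module.End K V)ˣ) : Module.End K V) (π₀ v)
            + ((ψ h : (Module.End K V)ˣ) : Module.End K V) (v - π₀ v) := _root_.map_add _ _ _
        _ = π₀ v + (v - π₀ v) := by rw [hv1, hv2]
        _ = v := by rw [add_sub_cancel]
        _ = (1 : Module.End K V) v := rfl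
    have hrk : finrank K ↥(LinearMap.range π₀) + finrank K ↥(LinearMap.ker π₀) = n := by
      rw [LinearMap.finrank_range_add_finrank_ker π₀, hV]
    have hRpos : 0 < finrank K ↥(LinearMap.range π₀) := by
      rcases Nat.eq_zero_or_pos (finrank K ↥(LinearMap.range π₀)) with h | h
      · exfalso
        exact hP0 (LinearMap.range_eq_bot.mp (Submodule.finrank_eq_zero.mp h))
      · exact h
    have hWpos : 0 < finrank K ↥(LinearMap.ker π₀) := by
      rcases Nat.eq_zero_or_pos (finrank K ↥(LinearMap.ker π₀)) with h | h
      · exfalso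
        have hinj0 : Injective π₀ :=
          LinearMap.ker_eq_bot.mp (Submodule.finrank_eq_zero.mp h)
        apply hP1
        apply LinearMap.ext
        intro v
        have : π₀ (π₀ v) = π₀ v := by rw [← Module.End.mul_apply, hid]
        have := hinj0 this
        simpa using this
      · exact h
    have hexpq : ∀ y : H ⧸ ρR.ker, y ^ p = 1 := by
      intro y
      induction y using QuotientGroup.induction_on with
      | _ x =>
        rw [← QuotientGroup.mk'_apply, ← _root_.map_pow, hexp, _root_.map_one]
    have hcard1 : Nat.card (H ⧸ ρR.ker) ≤ p ^ finrank K ↥(LinearMap.range π₀) := by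
      exact IH (finrank K ↥(LinearMap.range π₀)) (by omega) ↥(LinearMap.range π₀)
        inferInstance inferInstance inferInstance rfl (H ⧸ ρR.ker)
        inferInstance inferInstance hexpq (QuotientGroup.kerLift ρR)
        (QuotientGroup.kerLift_injective ρR)
    have hexpk : ∀ y : ↥ρR.ker, y ^ p = 1 := by
      intro y
      apply Subtype.ext
      rw [Subgroup.coe_pow, hexp]
      rfl
    have hinjk : Injective (ρW.comp ρR.ker.subtype) := by
      rw [injective_iff_map_eq_one]
      intro a ha
      have h1 : ρW a.val = 1 := ha
      have h2 : ρR a.val = 1 := a.2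
      exact Subtype.ext (hbridge a.val h2 h1)
    have hcard2 : Nat.card ↥ρR.ker ≤ p ^ finrank K ↥(LinearMap.ker π₀) := by
      exact IH (finrank K ↥(LinearMap.ker π₀)) (by omega) ↥(LinearMap.ker π₀)
        inferInstance inferInstance inferInstance rfl ↥ρR.ker
        inferInstance inferInstance hexpk (ρW.comp ρR.ker.subtype) hinjk
    calc Nat.card H
        = Nat.card (H ⧸ ρR.ker) * Nat.card ↥ρR.ker :=
          Subgroup.card_eq_card_quotient_mul_card_subgroup ρR.ker
      _ ≤ p ^ finrank K ↥(LinearMap.range π₀) * p ^ finrank K ↥(LinearMap.ker π₀) :=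
          Nat.mul_le_mul hcard1 hcard2
      _ = p ^ n := by rw [← pow_add, hrk]

end Key

section Wrapper

open Matrix

theorem card_range_le_of_GL (p : ℕ) (hp : p.Prime) (Fq : Type) [Field Fq]
    (hchar : ringChar Fq ≠ p) (n : ℕ)
    (G : Type) [CommGroup G] [Finite G] (hexp : ∀ g : G, g ^ p = 1)
    (f : G →* GL (Fin n) Fq) : Nat.card ↥f.range ≤ p ^ n := by
  classical
  set K := AlgebraicClosure Fq with hK
  have halg : Function.Injective (algebraMap Fq K) := (algebraMap Fq K).injective
  have hcharK : (p : K) ≠ 0 := by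
    intro h0
    have hch : CharP K (ringChar Fq) := charP_of_injective_ringHom halg (ringChar Fq)
    have hdvd : ringChar Fq ∣ p := (CharP.cast_eq_zero_iff K (ringChar Fq) p).mp h0
    rcases hp.eq_one_or_self_of_dvd _ hdvd with h1 | h1
    · have h2 : ((1 : ℕ) : Fq) = 0 :=
        (CharP.cast_eq_zero_iff Fq (ringChar Fq) 1).mpr (by rw [h1])
      simp at h2
    · exact hchar h1
  have hg2inj : Function.Injective (Matrix.GeneralLinearGroup.map (n := Fin n) (algebraMap Fq K)) := by
    apply Units.map_injective
    intro M N h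
    exact Matrix.map_injective halg (by simpa [RingHom.mapMatrix_apply] using h)
  let eEnd : Matrix (Fin n) (Fin n) K ≃* Module.End K (Fin n → K) :=
    Matrix.toLinAlgEquiv'.toRingEquiv.toMulEquiv
  let ψfull : (G ⧸ f.ker) →* (Module.End K (Fin n → K))ˣ :=
    ((Units.mapEquiv eEnd).toMonoidHom).comp
      ((Matrix.GeneralLinearGroup.map (algebraMap Fq K)).comp (QuotientGroup.kerLift f))
  have hψinj : Function.Injective ψfull := by
    have h1 := ((Units.mapEquiv eEnd).injective.comp
      (hg2inj.comp (QuotientGroup.kerLift_injective f)))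
    simpa [ψfull, MonoidHom.coe_comp] using h1
  have hexpQ : ∀ y : G ⧸ f.ker, y ^ p = 1 := by
    intro y
    induction y using QuotientGroup.induction_on with
    | _ x =>
      rw [← QuotientGroup.mk'_apply, ← _root_.map_pow, hexp]
      exact _root_.map_one _
  have hfr : finrank K (Fin n → K) = n := by
    rw [Module.finrank_pi]
    exact Fintype.card_fin n
  have hmain := key_card_le p K hp hcharK n (Fin n → K)
    inferInstance inferInstance inferInstance hfr (G ⧸ f.ker)
    inferInstance inferInstance hexpQ ψfull hψinj
  calc Nat.card ↥f.range = Nat.card (G ⧸ f.ker) :=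
        (Nat.card_congr (QuotientGroup.quotientKerEquivRange f).toEquiv).symm
    _ ≤ p ^ n := hmain

end Wrapper


section Glue

lemma exists_ker_elt (k : ℕ) (F : Fin k → Type) [∀ i, Field (F i)] (d : Fin k → ℕ)
    (p : ℕ) (hp : p.Prime) (m : ℕ) (hmgt : ∑ i, d i < m)
    (G : Type) [CommGroup G] [Finite G] (hcard : Nat.card G = p ^ m)
    (hexp : ∀ g : G, g ^ p = 1)
    (A : G →* (∀ i, GL (Fin (d i)) (F i))) :
    ∃ g : G, g ≠ 1 ∧ ∀ i, ringChar (F i) ≠ p → A g i = 1 := by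
  classical
  by_contra hcon
  push_neg at hcon
  let A' : G →* (∀ i : {i : Fin k // ringChar (F i) ≠ p}, GL (Fin (d i.val)) (F i.val)) :=
    { toFun := fun g i => A g i.val
      map_one' := by funext i; simp
      map_mul' := fun a b => by funext i; simp }
  have hA'inj : Function.Injective A' := by
    rw [injective_iff_map_eq_one]
    intro g hg
    by_contra hne
    obtain ⟨i, hi, hcomp⟩ := hcon g hne
    exact hcomp (congrFun hg ⟨i, hi⟩)
  let Gi : ∀ i : {i : Fin k // ringChar (F i) ≠ p}, G →* GL (Fin (d i.val)) (F i.val) :=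
    fun i => (Pi.evalMonoidHom _ i).comp A'
  haveI hfinr : ∀ i : {i : Fin k // ringChar (F i) ≠ p}, Finite ↥(Gi i).range :=
    fun i => Finite.of_surjective _ (Gi i).rangeRestrict_surjective
  have hembed : Function.Injective
      (fun g => (fun i => (⟨Gi i g, ⟨g, rfl⟩⟩ : ↥(Gi i).range)) :
        G → ∀ i : {i : Fin k // ringChar (F i) ≠ p}, ↥(Gi i).range) := by
    intro a b hab
    apply hA'inj
    funext i
    exact congrArg Subtype.val (congrFun hab i)
  have hle : Nat.card G ≤ ∏ i : {i : Fin k // ringChar (F i) ≠ p}, Nat.card ↥(Gi i).range := by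
    have h1 := Nat.card_le_card_of_injective _ hembed
    rwa [Nat.card_pi] at h1
  have hbound : ∀ i : {i : Fin k // ringChar (F i) ≠ p},
      Nat.card ↥(Gi i).range ≤ p ^ (d i.val) :=
    fun i => card_range_le_of_GL p hp (F i.val) i.2 (d i.val) G hexp (Gi i)
  have h2 : ∏ i : {i : Fin k // ringChar (F i) ≠ p}, Nat.card ↥(Gi i).range
      ≤ ∏ i : {i : Fin k // ringChar (F i) ≠ p}, p ^ (d i.val) :=
    Finset.prod_le_prod' (fun i _ => hbound i)
  have h3 : ∏ i : {i : Fin k // ringChar (F i) ≠ p}, p ^ (d i.val)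
      = p ^ (∑ i : {i : Fin k // ringChar (F i) ≠ p}, d i.val) :=
    Finset.prod_pow_eq_pow_sum _ _ _
  have h4 : (∑ i : {i : Fin k // ringChar (F i) ≠ p}, d i.val) ≤ ∑ i, d i := by
    have h5 : ∑ i ∈ Finset.filter (fun i => ringChar (F i) ≠ p) Finset.univ, d i
        = ∑ i : {i : Fin k // ringChar (F i) ≠ p}, d i.val :=
      Finset.sum_subtype _ (by simp) (fun i => d i)
    rw [← h5]
    exact Finset.sum_le_sum_of_subset (Finset.filter_subset _ _)
  have h6 : p ^ m ≤ p ^ (∑ i, d i) := by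
    calc p ^ m = Nat.card G := hcard.symm
      _ ≤ _ := hle.trans (h2.trans (h3 ▸ Nat.pow_le_pow_right hp.pos h4))
  have h7 : p ^ (∑ i, d i) < p ^ m := Nat.pow_lt_pow_right hp.one_lt hmgt
  omega

end Glue

/-- for `|B| ≥ 2` and `|C| ≥ 3`, `PAut[B;C]` is not a subdirect product of
finitely many linear groups. -/
theorem stmt15 (B C : Type) [Fintype B] [Fintype C]
    (hB : 2 ≤ Fintype.card B) (hC : 3 ≤ Fintype.card C)
    (k : ℕ) (F : Fin k → Type) [∀ i, Field (F i)] (d : Fin k → ℕ) :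
    ¬ ∃ φ : ↥(PAut B C) →* (∀ i, GL (Fin (d i)) (F i)), Function.Injective φ := by
  classical
  rintro ⟨φ, hφ⟩
  obtain ⟨b0, b1, hb⟩ := Fintype.exists_pair_of_one_lt_card (α := B) (by omega)
  obtain ⟨s, hs_sub, hs_card⟩ :=
    Finset.exists_subset_card_eq (s := (Finset.univ : Finset C)) (n := 3) (by simpa using hC)
  obtain ⟨c0, c1, c2, h01, h02, h12, hs⟩ := Finset.card_eq_three.mp hs_card
  set m : ℕ := (∑ i, d i) + 1 with hm
  let U : Multiplicative (Fin m → ZMod 2) →* ↥(PAut B C) :=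
    { toFun := fun e => ⟨uPerm b0 b1 c2 m (Multiplicative.toAdd e),
        uPerm_mem B C b0 b1 c2 m _⟩
      map_one' := Subtype.ext (uPerm_zero b0 b1 c2 m)
      map_mul' := fun a b => Subtype.ext (uPerm_add b0 b1 c2 m _ _) }
  let Vv : Multiplicative (Fin m → ZMod 3) →* ↥(PAut B C) :=
    { toFun := fun dl => ⟨vPerm b1 c0 c1 c2 m (Multiplicative.toAdd dl),
        vPerm_mem B C h01 h02 h12 b1 m _⟩
      map_one' := Subtype.ext (vPerm_zero b1 c0 c1 c2 m)
      map_mul' := fun a b => Subtype.ext (vPerm_add h01 h02 h12 b1 m _ _) }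
  have hcardU : Nat.card (Multiplicative (Fin m → ZMod 2)) = 2 ^ m := by
    show Nat.card (Fin m → ZMod 2) = 2 ^ m
    rw [Nat.card_pi]
    simp [Nat.card_zmod, Finset.prod_const, Finset.card_univ]
  have hcardV : Nat.card (Multiplicative (Fin m → ZMod 3)) = 3 ^ m := by
    show Nat.card (Fin m → ZMod 3) = 3 ^ m
    rw [Nat.card_pi]
    simp [Nat.card_zmod, Finset.prod_const, Finset.card_univ]
  have hexpU : ∀ g : Multiplicative (Fin m → ZMod 2), g ^ 2 = 1 := by
    intro g
    rw [pow_two]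
    have h0 : Multiplicative.toAdd g + Multiplicative.toAdd g = 0 := by
      funext j
      exact (by decide : ∀ z : ZMod 2, z + z = 0) _
    calc g * g
        = Multiplicative.ofAdd (Multiplicative.toAdd g + Multiplicative.toAdd g) := rfl
      _ = Multiplicative.ofAdd 0 := by rw [h0]
      _ = 1 := rfl
  have hexpV : ∀ g : Multiplicative (Fin m → ZMod 3), g ^ 3 = 1 := by
    intro g
    rw [pow_succ, pow_two]
    have h0 : Multiplicative.toAdd g + Multiplicative.toAdd g + Multiplicative.toAdd g = 0 := by
      funext j
      exact (by decide : ∀ z : ZMod 3, z + z + z = 0) _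
    calc g * g * g
        = Multiplicative.ofAdd
            (Multiplicative.toAdd g + Multiplicative.toAdd g + Multiplicative.toAdd g) := rfl
      _ = Multiplicative.ofAdd 0 := by rw [h0]
      _ = 1 := rfl
  obtain ⟨eg, hegne, heg⟩ := exists_ker_elt k F d 2 Nat.prime_two m (by omega) _ hcardU hexpU
    (φ.comp U)
  obtain ⟨dg, hdgne, hdg⟩ := exists_ker_elt k F d 3 Nat.prime_three m (by omega) _ hcardV hexpV
    (φ.comp Vv)
  have hcomm : φ (U eg) * φ (Vv dg) = φ (Vv dg) * φ (U eg) := by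
    funext i
    show (φ (U eg)) i * (φ (Vv dg)) i = (φ (Vv dg)) i * (φ (U eg)) i
    by_cases hchar2 : ringChar (F i) = 2
    · have h3 : ringChar (F i) ≠ 3 := by rw [hchar2]; decide
      have hv1 := hdg i h3
      simp only [MonoidHom.comp_apply] at hv1
      rw [hv1, one_mul, mul_one]
    · have hu1 := heg i hchar2
      simp only [MonoidHom.comp_apply] at hu1
      rw [hu1, one_mul, mul_one]
  have hcomm2 : U eg * Vv dg = Vv dg * U eg := by
    apply hφ
    rw [_root_.map_mul, _root_.map_mul, hcomm]
  have hcomm3 : uPerm b0 b1 c2 m (Multiplicative.toAdd eg)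
        * vPerm b1 c0 c1 c2 m (Multiplicative.toAdd dg)
      = vPerm b1 c0 c1 c2 m (Multiplicative.toAdd dg)
        * uPerm b0 b1 c2 m (Multiplicative.toAdd eg) :=
    congrArg Subtype.val hcomm2
  have hene : Multiplicative.toAdd eg ≠ 0 := by
    intro h0
    apply hegne
    have : eg = Multiplicative.ofAdd (Multiplicative.toAdd eg) := rfl
    rw [this, h0]
    rfl
  have hdne : Multiplicative.toAdd dg ≠ 0 := by
    intro h0
    apply hdgne
    have : dg = Multiplicative.ofAdd (Multiplicative.toAdd dg) := rfl
    rw [this, h0]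
    rfl
  exact noncomm b0 b1 hb c0 c1 c2 h01 h02 h12 m _ _ hene hdne hcomm3
end

section
/- Let B and C be finite types with |B| ≥ 2 and |C| ≥ 5, and let R[B;C] be the subgroup of Aut((B × C)^ℤ) generated by the partial shift σ₂ together with the symbol permutations π̄ where π ranges over the permutations of B × C satisfying (π(b,c)).1 = b for all (b,c). Then R[B;C] does not satisfy the Tits alternative: there is no injective group homomorphism from the free group on two generators into R[B;C], and R[B;C] has no solvable subgroup of finite index. -/
/-!
Every element of `R[B;C]` is `σ₂ ^ k` followed by a cellwise permutation of the second track
(the permutation at a cell depending on the whole first track), and the shift exponent `k` is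
additive. Hence every commutator is cellwise, and cellwise permutations form a group whose exponent
divides that of `Perm C`: all commutators are torsion, which excludes a free subgroup of rank two.

On the other hand, `A₅` embeds in `Perm C` and is perfect, so commutators of rules checking
shorter patterns of the first track yield, for every `n`, an embedding of `A₅ ^ (B ^ n)` into
`R[B;C]`. The normal core of a solvable subgroup of finite index `N` would pull back to a
solvable normal subgroup of `A₅ ^ (B ^ N)`, hence a trivial one, which is impossible as
`60 ^ (|B| ^ N) > N`.
-/

open Function

/-- `R[B;C]`: the subgroup of `Aut((B × C)^ℤ)` generated by the partial shift on the second
track together with symbol permutations fixing the first track. -/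
def RGrp (B C : Type*) : Subgroup (Equiv.Perm (ℤ → B × C)) :=
  Subgroup.closure
    ({partialShift₂ B C} ∪
      {f | ∃ π : Equiv.Perm (B × C), (∀ a : B × C, (π a).1 = a.1) ∧ f = symbolPerm π})

open Equiv
open scoped commutatorElement

section GroupTheory

variable {G Γ Q : Type*} [Group G] [Group Γ]

theorem not_injective_freeGroup_of_pow_commutatorElement_eq_one {n : ℕ}
    (hn : n ≠ 0) (h : ∀ a b : G, ⁅a, b⁆ ^ n = 1) (φ : FreeGroup (Fin 2) →* G) :
    ¬ Injective φ := by
  intro hφ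
  have hpow : ⁅FreeGroup.of (0 : Fin 2), FreeGroup.of (1 : Fin 2)⁆ ^ n = 1 ^ n :=
    hφ (by rw [map_pow, map_commutatorElement, h, one_pow, map_one])
  exact absurd (pow_left_injective hn hpow) (by decide)

lemma Subgroup.eq_bot_of_normal_of_isSolvable_pi [IsSimpleGroup Γ] (hΓ : ¬ Group.IsSolvable Γ)
    (N : Subgroup (Q → Γ)) [N.Normal] [Group.IsSolvable N] : N = ⊥ := by
  refine (Subgroup.eq_bot_iff_forall N).2 fun x hx => funext fun q => ?_
  set f := Pi.evalMonoidHom (fun _ : Q => Γ) q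
  rcases IsSimpleGroup.eq_bot_or_eq_top_of_normal (N.map f)
    (Subgroup.Normal.map ‹_› f fun g => ⟨fun _ => g, rfl⟩) with h | h
  · exact (Subgroup.mem_bot.1 (h ▸ Subgroup.mem_map_of_mem f hx) :)
  · refine absurd (Group.isSolvable_of_surjective (f := f.comp N.subtype) fun g => ?_) hΓ
    obtain ⟨y, hy, rfl⟩ := h ▸ Subgroup.mem_top g
    exact ⟨⟨y, hy⟩, rfl⟩

lemma card_pi_dvd_index_normalCore [IsSimpleGroup Γ] (hΓ : ¬ Group.IsSolvable Γ)
    {θ : (Q → Γ) →* G} (hθ : Injective θ) (K : Subgroup G) [Group.IsSolvable K] :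
    Nat.card (Q → Γ) ∣ K.normalCore.index := by
  set L := K.normalCore.comap θ
  have : Group.IsSolvable L := Group.isSolvable_of_isSolvable_injective
    (f := (θ.subgroupComap K).comp (Subgroup.inclusion (Subgroup.comap_mono K.normalCore_le)))
    fun _ _ h => Subtype.ext (hθ (congrArg (fun x : K => (x : G)) h))
  have hL : L = ⊥ := Subgroup.eq_bot_of_normal_of_isSolvable_pi hΓ L
  calc Nat.card (Q → Γ) = L.index := by rw [hL, Subgroup.index_bot]
    _ = K.normalCore.relIndex θ.range := Subgroup.index_comap _ _
    _ ∣ K.normalCore.index := Subgroup.relIndex_dvd_index_of_normal _ _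

theorem not_isSolvable_of_forall_injective_pi {B : Type*} [Finite B] [IsSimpleGroup Γ] [Finite Γ]
    (hΓ : ¬ Group.IsSolvable Γ) (hB : 2 ≤ Nat.card B)
    (hθ : ∀ n : ℕ, ∃ θ : ((Fin n → B) → Γ) →* G, Injective θ) (K : Subgroup G)
    (hK : K.index ≠ 0) : ¬ Group.IsSolvable K := by
  intro hsolv
  have : K.FiniteIndex := ⟨hK⟩
  set n := K.normalCore.index
  obtain ⟨θ, hθ⟩ := hθ n
  have hle := Nat.le_of_dvd (Nat.pos_of_ne_zero Subgroup.FiniteIndex.index_ne_zero)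
    (card_pi_dvd_index_normalCore hΓ hθ K)
  rw [Nat.card_fun, Nat.card_fun, Nat.card_fin] at hle
  have h₁ : n < Nat.card B ^ n := Nat.lt_pow_self hB
  have h₂ : Nat.card B ^ n < Nat.card Γ ^ Nat.card B ^ n := Nat.lt_pow_self Finite.one_lt_card
  omega

end GroupTheory

section Cellwise

variable {B C : Type*}

def cellwise : ((ℤ → B) → Perm C) →* Perm (ℤ → B × C) where
  toFun ρ :=
    { toFun x i := ((x i).1, ρ (fun j => (x (i + j)).1) (x i).2)
      invFun x i := ((x i).1, (ρ (fun j => (x (i + j)).1))⁻¹ (x i).2)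
      left_inv x := by funext i; simp
      right_inv x := by funext i; simp }
  map_one' := rfl
  map_mul' _ _ := rfl

@[simp]
lemma cellwise_apply (ρ : (ℤ → B) → Perm C) (x : ℤ → B × C) (i : ℤ) :
    cellwise ρ x i = ((x i).1, ρ (fun j => (x (i + j)).1) (x i).2) :=
  rfl

lemma cellwise_injective : Injective (cellwise : ((ℤ → B) → Perm C) →* _) := by
  refine (injective_iff_map_eq_one _).2 fun ρ hρ => funext fun y => Equiv.ext fun c => ?_
  simpa using congrArg (fun f : Perm (ℤ → B × C) => (f (fun j => (y j, c)) 0).2) hρ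

lemma cellwise_pow_exponent [Finite C] (ρ : (ℤ → B) → Perm C) :
    cellwise ρ ^ Monoid.exponent (Perm C) = 1 := by
  rw [← map_pow, show ρ ^ _ = 1 from funext fun y => Monoid.pow_exponent_eq_one (ρ y), map_one]

lemma partialShift₂_zpow_apply (k : ℤ) (x : ℤ → B × C) (i : ℤ) :
    (partialShift₂ B C ^ k) x i = ((x i).1, (x (i + k)).2) := by
  induction k using Int.induction_on generalizing x with
  | zero => simp
  | succ k ih =>
    rw [zpow_add_one, Perm.mul_apply, ih]
    simp [partialShift₂, add_assoc]
  | pred k ih =>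
    rw [zpow_sub_one, Perm.mul_apply, ih]
    simp [partialShift₂, Perm.inv_def, Equiv.symm, sub_eq_add_neg, add_assoc]

lemma cellwise_mul_partialShift₂_zpow (ρ : (ℤ → B) → Perm C) (k : ℤ) :
    cellwise ρ * partialShift₂ B C ^ k =
      partialShift₂ B C ^ k * cellwise (fun y => ρ (fun j => y (j - k))) := by
  ext x i <;> simp [partialShift₂_zpow_apply, add_right_comm]

def HasShiftDegree (k : ℤ) (f : Perm (ℤ → B × C)) : Prop :=
  ∃ ρ, f = partialShift₂ B C ^ k * cellwise ρ

lemma hasShiftDegree_one : HasShiftDegree 0 (1 : Perm (ℤ → B × C)) :=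
  ⟨1, by simp⟩

lemma HasShiftDegree.mul {k l : ℤ} {f g : Perm (ℤ → B × C)} (hf : HasShiftDegree k f)
    (hg : HasShiftDegree l g) : HasShiftDegree (k + l) (f * g) := by
  obtain ⟨ρ, rfl⟩ := hf
  obtain ⟨ρ', rfl⟩ := hg
  refine ⟨(fun y => ρ (fun j => y (j - l))) * ρ', ?_⟩
  rw [map_mul, zpow_add, mul_assoc, ← mul_assoc (cellwise ρ), cellwise_mul_partialShift₂_zpow]
  simp only [mul_assoc]

lemma HasShiftDegree.inv {k : ℤ} {f : Perm (ℤ → B × C)} (hf : HasShiftDegree k f) :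
    HasShiftDegree (-k) f⁻¹ := by
  obtain ⟨ρ, rfl⟩ := hf
  exact ⟨_, by rw [mul_inv_rev, ← map_inv, ← zpow_neg, cellwise_mul_partialShift₂_zpow]⟩

lemma HasShiftDegree.commutatorElement {k l : ℤ} {f g : Perm (ℤ → B × C)}
    (hf : HasShiftDegree k f) (hg : HasShiftDegree l g) : HasShiftDegree 0 ⁅f, g⁆ := by
  have h := ((hf.mul hg).mul hf.inv).mul hg.inv
  rwa [show k + l + -k + -l = 0 by ring] at h

lemma symbolPerm_prodShear (τ : B → Perm C) :
    symbolPerm (prodShear (Equiv.refl B) τ) = cellwise (fun y => τ (y 0)) := by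
  ext x i <;> simp [symbolPerm]

lemma exists_eq_prodShear {π : Perm (B × C)} (hπ : ∀ a, (π a).1 = a.1) :
    ∃ τ : B → Perm C, π = prodShear (Equiv.refl B) τ := by
  have hπ' : ∀ a, (π.symm a).1 = a.1 := fun a => by
    simpa using (hπ (π.symm a)).symm
  refine ⟨fun b =>
    { toFun c := (π (b, c)).2
      invFun c := (π.symm (b, c)).2
      left_inv c := ?_
      right_inv c := ?_ }, ?_⟩
  · simp [show (b, (π (b, c)).2) = π (b, c) from Prod.ext (hπ (b, c)).symm rfl]
  · simp [show (b, (π.symm (b, c)).2) = π.symm (b, c) from Prod.ext (hπ' (b, c)).symm rfl]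
  · ext a
    · simp [hπ]
    · simp

end Cellwise

section RGrp

variable {B C : Type*}

lemma partialShift₂_mem_RGrp : partialShift₂ B C ∈ RGrp B C :=
  Subgroup.subset_closure (Or.inl rfl)

lemma cellwise_eval_zero_mem_RGrp (τ : B → Perm C) :
    cellwise (fun y => τ (y 0)) ∈ RGrp B C :=
  symbolPerm_prodShear τ ▸ Subgroup.subset_closure (Or.inr ⟨_, fun _ => rfl, rfl⟩)

lemma cellwise_eval_mem_RGrp (τ : B → Perm C) (k : ℤ) :
    cellwise (fun y => τ (y k)) ∈ RGrp B C := by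
  have h := cellwise_mul_partialShift₂_zpow (fun y => τ (y k)) k
  simp only [sub_self] at h
  rw [← mul_inv_eq_iff_eq_mul.2 h.symm]
  have hσ := zpow_mem (partialShift₂_mem_RGrp (B := B) (C := C)) k
  exact mul_mem (mul_mem hσ (cellwise_eval_zero_mem_RGrp τ)) (inv_mem hσ)

lemma exists_hasShiftDegree_of_mem_RGrp {f : Perm (ℤ → B × C)} (hf : f ∈ RGrp B C) :
    ∃ k, HasShiftDegree k f := by
  induction hf using Subgroup.closure_induction with
  | mem f hf =>
    rcases hf with rfl | ⟨π, hπ, rfl⟩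
    · exact ⟨1, 1, by simp⟩
    · obtain ⟨τ, rfl⟩ := exists_eq_prodShear hπ
      exact ⟨0, _, by rw [symbolPerm_prodShear, zpow_zero, one_mul]⟩
  | one => exact ⟨0, hasShiftDegree_one⟩
  | mul f g _ _ hf hg =>
    obtain ⟨k, hk⟩ := hf
    obtain ⟨l, hl⟩ := hg
    exact ⟨k + l, hk.mul hl⟩
  | inv f _ hf =>
    obtain ⟨k, hk⟩ := hf
    exact ⟨-k, hk.inv⟩

lemma commutatorElement_pow_exponent_eq_one_of_mem_RGrp [Finite C] {f g : Perm (ℤ → B × C)}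
    (hf : f ∈ RGrp B C) (hg : g ∈ RGrp B C) :
    ⁅f, g⁆ ^ Monoid.exponent (Perm C) = 1 := by
  obtain ⟨k, hk⟩ := exists_hasShiftDegree_of_mem_RGrp hf
  obtain ⟨l, hl⟩ := exists_hasShiftDegree_of_mem_RGrp hg
  obtain ⟨ρ, hρ⟩ := hk.commutatorElement hl
  rw [hρ, zpow_zero, one_mul, cellwise_pow_exponent]

end RGrp

section WindowRule

variable {B C : Type*}

def window (n : ℕ) (y : ℤ → B) : Fin n → B :=
  fun j => y j

lemma window_surjective [Nonempty B] (n : ℕ) : Surjective (window (B := B) n) := fun q =>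
  ⟨extend (fun j : Fin n => (j : ℤ)) q (fun _ => Classical.arbitrary B),
    funext fun j => (Nat.cast_injective.comp Fin.val_injective).extend_apply _ _ j⟩

lemma window_succ (n : ℕ) (y : ℤ → B) : window (n + 1) y = Fin.snoc (window n y) (y n) := by
  funext j
  induction j using Fin.lastCases <;> simp [window]

def windowRule (n : ℕ) : ((Fin n → B) → Perm C) →* Perm (ℤ → B × C) :=
  cellwise.comp
    { toFun g := g ∘ window n
      map_one' := rfl
      map_mul' _ _ := rfl }

lemma windowRule_apply (n : ℕ) (g : (Fin n → B) → Perm C) :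
    windowRule n g = cellwise (g ∘ window n) :=
  rfl

lemma windowRule_injective [Nonempty B] (n : ℕ) :
    Injective (windowRule (B := B) (C := C) n) :=
  cellwise_injective.comp (window_surjective n).injective_comp_right

variable [DecidableEq B]

lemma windowRule_mulSingle_commutatorElement (n : ℕ) (q : Fin (n + 1) → B) (a b : Perm C) :
    windowRule (n + 1) (Pi.mulSingle q ⁅a, b⁆) =
      ⁅windowRule n (Pi.mulSingle (Fin.init q) a),
        cellwise (fun y => (Pi.mulSingle (q (Fin.last n)) b : B → Perm C) (y n))⁆ := by
  rw [windowRule_apply, windowRule_apply, ← map_commutatorElement]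
  congr 1
  funext y
  rw [← Fin.snoc_init_self q]
  simp only [commutatorElement_def, Pi.mul_apply, Pi.inv_apply, comp_apply, window_succ,
    Pi.mulSingle_apply, Fin.snoc_inj, Fin.init_snoc, Fin.snoc_last]
  split_ifs <;> simp_all

/-- Since `H` is generated by commutators, it suffices that the commutator of a rule checking the
first `n` symbols of a pattern with one checking its last symbol checks the whole pattern. -/
lemma windowRule_mulSingle_mem_RGrp {H : Subgroup (Perm C)} (hH : ⁅H, H⁆ = H) (n : ℕ)
    (q : Fin n → B) {h : Perm C} (hh : h ∈ H) :
    windowRule n (Pi.mulSingle q h) ∈ RGrp B C := by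
  induction n generalizing h with
  | zero =>
    convert cellwise_eval_mem_RGrp (fun _ => h) 0 using 1
    rw [windowRule_apply]
    congr 1
    funext y
    rw [comp_apply, Subsingleton.elim (window 0 y) q, Pi.mulSingle_eq_same]
  | succ n ih =>
    revert h
    show H ≤ (RGrp B C).comap ((windowRule (n + 1)).comp (MonoidHom.mulSingle _ q))
    rw [← hH, Subgroup.commutator_le]
    intro a ha b hb
    simp only [Subgroup.mem_comap, MonoidHom.comp_apply, MonoidHom.mulSingle_apply,
      windowRule_mulSingle_commutatorElement]
    have hX := ih (Fin.init q) ha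
    have hY := cellwise_eval_mem_RGrp (Pi.mulSingle (q (Fin.last n)) b) n
    rw [commutatorElement_def]
    exact mul_mem (mul_mem (mul_mem hX hY) (inv_mem hX)) (inv_mem hY)

lemma windowRule_mem_RGrp [Finite B] {H : Subgroup (Perm C)} (hH : ⁅H, H⁆ = H) (n : ℕ)
    {g : (Fin n → B) → Perm C} (hg : ∀ q, g q ∈ H) : windowRule n g ∈ RGrp B C := by
  have hpi : Subgroup.pi Set.univ (fun _ => H) ≤ (RGrp B C).comap (windowRule n) :=
    Subgroup.pi_le_iff.2 fun q => Subgroup.map_le_iff_le_comap.2 fun _ hh =>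
      windowRule_mulSingle_mem_RGrp hH n q hh
  exact hpi fun q _ => hg q

end WindowRule

lemma exists_injective_pi_hom_RGrp {B C Γ : Type*} [Finite B] [Nonempty B] [DecidableEq B]
    [Group Γ] (hΓ : commutator Γ = ⊤) {u : Γ →* Perm C} (hu : Injective u) (n : ℕ) :
    ∃ θ : ((Fin n → B) → Γ) →* RGrp B C, Injective θ := by
  have hperfect : ⁅u.range, u.range⁆ = u.range := by
    rw [MonoidHom.range_eq_map, ← Subgroup.map_commutator, ← commutator_def, hΓ]
  refine ⟨((windowRule n).comp (u.compLeft _)).codRestrict (RGrp B C)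
    fun g => windowRule_mem_RGrp hperfect n fun q => ⟨g q, rfl⟩, fun _ _ h => ?_⟩
  exact (windowRule_injective n).comp hu.comp_left (congrArg Subtype.val h)

/-- for `|B| ≥ 2` and `|C| ≥ 5`, `R[B;C]` fails the Tits alternative: it contains
no free group of rank two, and it has no solvable subgroup of finite index. -/
theorem stmt18 (B C : Type) [Fintype B] [Fintype C]
    (hB : 2 ≤ Fintype.card B) (hC : 5 ≤ Fintype.card C) :
    (¬ ∃ φ : FreeGroup (Fin 2) →* ↥(RGrp B C), Function.Injective φ) ∧
    (∀ K : Subgroup ↥(RGrp B C), K.index ≠ 0 → ¬ IsSolvable ↥K) := by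
  classical
  refine ⟨fun ⟨φ, hφ⟩ => ?_, fun K hK => ?_⟩
  · refine not_injective_freeGroup_of_pow_commutatorElement_eq_one
      (Monoid.exponent_ne_zero_of_finite (G := Perm C)) (fun f g => Subtype.ext ?_) φ hφ
    exact commutatorElement_pow_exponent_eq_one_of_mem_RGrp f.2 g.2
  · have : Nonempty B := Fintype.card_pos_iff.1 (by omega)
    obtain ⟨e⟩ : Nonempty (Fin 5 ↪ C) :=
      Function.Embedding.nonempty_of_card_le (by simpa using hC)
    have hA₅ : commutator (alternatingGroup (Fin 5)) = ⊤ :=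
      commutator_alternatingGroup_eq_top (by simp)
    refine not_isSolvable_of_forall_injective_pi
      (fun _ => (Group.IsSolvable.commutator_lt_top_of_nontrivial _).ne hA₅)
      (by simpa using hB)
      (exists_injective_pi_hom_RGrp hA₅ (u := (Perm.viaEmbeddingHom e).comp (Subgroup.subtype _))
        ((Perm.viaEmbeddingHom_injective e).comp Subtype.val_injective))
      K hK
end
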